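/- arXiv:2306.16833 — 11 statements merged into one kernel-verified Lean document; each statement's English description precedes it below -/
import Mathlib

section
/- Let ε > 0, let p : [0,1] → ℝ be continuously differentiable, let q, f : [0,1] → ℝ be continuous, and suppose there exists β > 0 with q(x) − p'(x)/2 ≥ β for all x ∈ [0,1]. If u : [0,1] → ℝ is twice continuously differentiable with u(0) = u(1) = 0 and −ε·u''(x) + p(x)·u'(x) + q(x)·u(x) = f(x) for all x ∈ [0,1], then ∫₀¹ u(x)² dx ≤ (1/β²)·∫₀¹ f(x)² dx. -/
/-!
Multiply the equation by `u` and integrate by parts, using `u(0) = u(1) = 0`: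
`-ε ∫ u'' u = ε ∫ u'²` and `∫ p u' u = -½ ∫ p' u²`, so `∫ f u = ε ∫ u'² + ∫ (q - p'/2) u² ≥ β ∫ u²`.
Young's inequality `2β f u ≤ β² u² + f²` then lets the `u²` term be absorbed: `β² ∫ u² ≤ ∫ f²`.
-/

open MeasureTheory Set

theorem integral_deriv_mul_add_mul_deriv_eq_zero {a b : ℝ} (hab : a ≤ b) {v v' w w' : ℝ → ℝ}
    (hv : ∀ x ∈ Icc a b, HasDerivAt v (v' x) x) (hw : ∀ x ∈ Icc a b, HasDerivAt w (w' x) x)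
    (hv' : ContinuousOn v' (Icc a b)) (hw' : ContinuousOn w' (Icc a b))
    (hwa : w a = 0) (hwb : w b = 0) :
    ∫ x in a..b, (v' x * w x + v x * w' x) = 0 := by
  have hIoo : Ioo (min a b) (max a b) ⊆ Icc a b := by
    rw [min_eq_left hab, max_eq_right hab]; exact Ioo_subset_Icc_self
  have hcv : ContinuousOn v (uIcc a b) := by
    rw [uIcc_of_le hab]; exact HasDerivAt.continuousOn hv
  have hcw : ContinuousOn w (uIcc a b) := by
    rw [uIcc_of_le hab]; exact HasDerivAt.continuousOn hw
  rw [intervalIntegral.integral_deriv_mul_eq_sub_of_hasDerivAt hcv hcw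
    (fun x hx => hv x (hIoo hx)) (fun x hx => hw x (hIoo hx))
    (hv'.intervalIntegrable_of_Icc hab) (hw'.intervalIntegrable_of_Icc hab), hwa, hwb]
  ring

theorem integral_mul_eq_of_convection_diffusion {a b ε : ℝ} (hab : a ≤ b)
    {p p' q f u u' u'' : ℝ → ℝ}
    (hp : ∀ x ∈ Icc a b, HasDerivAt p (p' x) x) (hp' : ContinuousOn p' (Icc a b))
    (hq : ContinuousOn q (Icc a b)) (hf : ContinuousOn f (Icc a b))
    (hu : ∀ x ∈ Icc a b, HasDerivAt u (u' x) x) (hu' : ∀ x ∈ Icc a b, HasDerivAt u' (u'' x) x)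
    (hu'' : ContinuousOn u'' (Icc a b)) (hua : u a = 0) (hub : u b = 0)
    (heq : ∀ x ∈ Icc a b, -ε * u'' x + p x * u' x + q x * u x = f x) :
    ∫ x in a..b, f x * u x = ∫ x in a..b, (ε * u' x ^ 2 + (q x - p' x / 2) * u x ^ 2) := by
  have hcp : ContinuousOn p (Icc a b) := HasDerivAt.continuousOn hp
  have hcu : ContinuousOn u (Icc a b) := HasDerivAt.continuousOn hu
  have hcu' : ContinuousOn u' (Icc a b) := HasDerivAt.continuousOn hu'
  have hdiffusion : ∫ x in a..b, (u'' x * u x + u' x * u' x) = 0 :=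
    integral_deriv_mul_add_mul_deriv_eq_zero hab hu' hu hu'' hcu' hua hub
  have hconvection :
      ∫ x in a..b, (p' x * (u x * u x) + p x * (u' x * u x + u x * u' x)) = 0 :=
    integral_deriv_mul_add_mul_deriv_eq_zero hab hp (fun x hx => (hu x hx).mul (hu x hx)) hp'
      ((hcu'.mul hcu).add (hcu.mul hcu')) (by simp [hua]) (by simp [hub])
  have hdiff : ∫ x in a..b, (f x * u x - (ε * u' x ^ 2 + (q x - p' x / 2) * u x ^ 2)) =
      ∫ x in a..b, (-ε * (u'' x * u x + u' x * u' x) +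
        1 / 2 * (p' x * (u x * u x) + p x * (u' x * u x + u x * u' x))) := by
    refine intervalIntegral.integral_congr fun x hx => ?_
    rw [uIcc_of_le hab] at hx
    linear_combination (-u x) * heq x hx
  rw [intervalIntegral.integral_add, intervalIntegral.integral_const_mul,
    intervalIntegral.integral_const_mul, hdiffusion, hconvection,
    intervalIntegral.integral_sub] at hdiff
  · linarith
  all_goals
    apply ContinuousOn.intervalIntegrable_of_Icc hab
    fun_prop

theorem integral_sq_le_of_mul_integral_sq_le_integral_mul {a b β : ℝ} (hab : a ≤ b) (hβ : 0 < β)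
    {f u : ℝ → ℝ} (hf : IntervalIntegrable (fun x => f x ^ 2) volume a b)
    (hu : IntervalIntegrable (fun x => u x ^ 2) volume a b)
    (hfu : IntervalIntegrable (fun x => f x * u x) volume a b)
    (h : β * ∫ x in a..b, u x ^ 2 ≤ ∫ x in a..b, f x * u x) :
    ∫ x in a..b, u x ^ 2 ≤ 1 / β ^ 2 * ∫ x in a..b, f x ^ 2 := by
  have hyoung : 2 * β * ∫ x in a..b, f x * u x ≤
      (β ^ 2 * ∫ x in a..b, u x ^ 2) + ∫ x in a..b, f x ^ 2 := by
    rw [← intervalIntegral.integral_const_mul, ← intervalIntegral.integral_const_mul,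
      ← intervalIntegral.integral_add (hu.const_mul _) hf]
    refine intervalIntegral.integral_mono_on hab (hfu.const_mul _) ((hu.const_mul _).add hf)
      fun x _ => ?_
    linarith [two_mul_le_add_sq (β * u x) (f x)]
  rw [one_div_mul_eq_div, le_div_iff₀ (by positivity)]
  nlinarith [mul_le_mul_of_nonneg_left h (by positivity : (0 : ℝ) ≤ 2 * β)]

theorem stmt1 (ε : ℝ) (hε : 0 < ε)
    (p p' q f u u' u'' : ℝ → ℝ) (β : ℝ) (hβ : 0 < β)
    (hp : ∀ x ∈ Icc (0:ℝ) 1, HasDerivAt p (p' x) x)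
    (hp' : ContinuousOn p' (Icc (0:ℝ) 1))
    (hq : ContinuousOn q (Icc (0:ℝ) 1))
    (hf : ContinuousOn f (Icc (0:ℝ) 1))
    (hqp : ∀ x ∈ Icc (0:ℝ) 1, β ≤ q x - p' x / 2)
    (hu : ∀ x ∈ Icc (0:ℝ) 1, HasDerivAt u (u' x) x)
    (hu' : ∀ x ∈ Icc (0:ℝ) 1, HasDerivAt u' (u'' x) x)
    (hu'' : ContinuousOn u'' (Icc (0:ℝ) 1))
    (hu0 : u 0 = 0) (hu1 : u 1 = 0)
    (heq : ∀ x ∈ Icc (0:ℝ) 1, -ε * u'' x + p x * u' x + q x * u x = f x) :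
    ∫ x in (0:ℝ)..1, (u x) ^ 2 ≤ (1 / β ^ 2) * ∫ x in (0:ℝ)..1, (f x) ^ 2 := by
  have hcu : ContinuousOn u (Icc 0 1) := HasDerivAt.continuousOn hu
  have hcu' : ContinuousOn u' (Icc 0 1) := HasDerivAt.continuousOn hu'
  have hcoercive : β * ∫ x in (0:ℝ)..1, u x ^ 2 ≤ ∫ x in (0:ℝ)..1, f x * u x := by
    rw [integral_mul_eq_of_convection_diffusion zero_le_one hp hp' hq hf hu hu' hu'' hu0 hu1 heq,
      ← intervalIntegral.integral_const_mul]
    refine intervalIntegral.integral_mono_on zero_le_one ?_ ?_ fun x hx => ?_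
    · exact ContinuousOn.intervalIntegrable_of_Icc zero_le_one (by fun_prop)
    · exact ContinuousOn.intervalIntegrable_of_Icc zero_le_one (by fun_prop)
    · nlinarith [hqp x hx, sq_nonneg (u x), mul_nonneg hε.le (sq_nonneg (u' x))]
  exact integral_sq_le_of_mul_integral_sq_le_integral_mul zero_le_one hβ
    ((hf.pow 2).intervalIntegrable_of_Icc zero_le_one)
    ((hcu.pow 2).intervalIntegrable_of_Icc zero_le_one)
    ((hf.mul hcu).intervalIntegrable_of_Icc zero_le_one) hcoercive
end

section
/- Let ε > 0, let f : [0,1] → ℝ be continuous, and let u : [0,1] → ℝ be twice continuously differentiable with u(0) = u(1) = 0 and −ε·u''(x) + u'(x) = f(x) for all x ∈ [0,1]. Then ε·∫₀¹ e^{−x}·(u'(x))² dx + ((1−ε)/2)·∫₀¹ e^{−x}·u(x)² dx = ∫₀¹ e^{−x}·u(x)·f(x) dx. -/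
open MeasureTheory Set

/- Using `-ε u'' + u' = f`, the function `e^{-x} (-ε u u' + (1 - ε)/2 u²)` is an antiderivative
of `e^{-x} u f - ε e^{-x} u'² - (1 - ε)/2 e^{-x} u²`, and it vanishes
at both endpoints because `u` does. -/

lemma hasDerivAt_exp_neg_mul_energy (ε : ℝ) {u u' : ℝ → ℝ} {x u'' : ℝ}
    (hu : HasDerivAt u (u' x) x) (hu' : HasDerivAt u' u'' x) :
    HasDerivAt (fun y => Real.exp (-y) * (-ε * (u y * u' y) + (1 - ε) / 2 * u y ^ 2))
      (Real.exp (-x) * u x * (-ε * u'' + u' x)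
        - (ε * (Real.exp (-x) * u' x ^ 2) + (1 - ε) / 2 * (Real.exp (-x) * u x ^ 2))) x := by
  have hexp : HasDerivAt (fun y => Real.exp (-y)) (-Real.exp (-x)) x := by
    simpa using (hasDerivAt_neg x).exp
  refine (hexp.mul (((hu.mul hu').const_mul (-ε)).add
    ((hu.pow 2).const_mul ((1 - ε) / 2)))).congr_deriv ?_
  simp only [Pi.add_apply, Pi.mul_apply, Pi.pow_apply]
  norm_num
  ring

theorem stmt2_general (ε : ℝ)
    (f u u' u'' : ℝ → ℝ)
    (hf : ContinuousOn f (Icc (0:ℝ) 1))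
    (hu : ∀ x ∈ Icc (0:ℝ) 1, HasDerivAt u (u' x) x)
    (hu' : ∀ x ∈ Icc (0:ℝ) 1, HasDerivAt u' (u'' x) x)
    (hu0 : u 0 = 0) (hu1 : u 1 = 0)
    (heq : ∀ x ∈ Icc (0:ℝ) 1, -ε * u'' x + u' x = f x) :
    ε * (∫ x in (0:ℝ)..1, Real.exp (-x) * (u' x) ^ 2)
      + ((1 - ε) / 2) * (∫ x in (0:ℝ)..1, Real.exp (-x) * (u x) ^ 2)
      = ∫ x in (0:ℝ)..1, Real.exp (-x) * u x * f x := by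
  rw [← uIcc_of_le zero_le_one] at hf hu hu' heq
  have hexp : ContinuousOn (fun x : ℝ => Real.exp (-x)) (uIcc 0 1) := by fun_prop
  have hcu : ContinuousOn u (uIcc 0 1) := fun x hx => (hu x hx).continuousAt.continuousWithinAt
  have hcu' : ContinuousOn u' (uIcc 0 1) := fun x hx => (hu' x hx).continuousAt.continuousWithinAt
  have hf_int := ((hexp.mul hcu).mul hf).intervalIntegrable (μ := volume)
  have hu'_int := (hexp.mul (hcu'.pow 2)).intervalIntegrable (μ := volume) |>.const_mul ε
  have hu_int :=
    (hexp.mul (hcu.pow 2)).intervalIntegrable (μ := volume) |>.const_mul ((1 - ε) / 2)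
  have hFTC := intervalIntegral.integral_eq_sub_of_hasDerivAt
    (fun x hx => heq x hx ▸ hasDerivAt_exp_neg_mul_energy ε (hu x hx) (hu' x hx))
    (hf_int.sub (hu'_int.add hu_int))
  rw [intervalIntegral.integral_sub hf_int (hu'_int.add hu_int),
    intervalIntegral.integral_add hu'_int hu_int, intervalIntegral.integral_const_mul,
    intervalIntegral.integral_const_mul, hu0, hu1] at hFTC
  simp only [Pi.mul_apply, Pi.pow_apply, zero_mul, mul_zero, zero_pow two_ne_zero, add_zero,
    sub_zero] at hFTC
  linarith

theorem stmt2 (ε : ℝ) (hε : 0 < ε)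
    (f u u' u'' : ℝ → ℝ)
    (hf : ContinuousOn f (Icc (0:ℝ) 1))
    (hu : ∀ x ∈ Icc (0:ℝ) 1, HasDerivAt u (u' x) x)
    (hu' : ∀ x ∈ Icc (0:ℝ) 1, HasDerivAt u' (u'' x) x)
    (hu'' : ContinuousOn u'' (Icc (0:ℝ) 1))
    (hu0 : u 0 = 0) (hu1 : u 1 = 0)
    (heq : ∀ x ∈ Icc (0:ℝ) 1, -ε * u'' x + u' x = f x) :
    ε * (∫ x in (0:ℝ)..1, Real.exp (-x) * (u' x) ^ 2)
      + ((1 - ε) / 2) * (∫ x in (0:ℝ)..1, Real.exp (-x) * (u x) ^ 2)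
      = ∫ x in (0:ℝ)..1, Real.exp (-x) * u x * f x :=
  stmt2_general ε f u u' u'' hf hu hu' hu0 hu1 heq
end

section
/- Let X be a normed vector space equipped with a Borel probability measure μ, let Y be a Banach space, and let m, p be positive integers. Suppose G : X → Y is Lipschitz with constant L_G, R : ℝ^p → Y is Lipschitz with constant L_R, P : Y → ℝ^p is a map such that R∘P : Y → Y is Lipschitz with constant L_{RP}, and E : X → ℝ^m, D : ℝ^m → X, A : ℝ^m → ℝ^p are Borel measurable maps such that all the functions appearing below are square-integrable with respect to μ. Define N : X → Y by N(f) = R(A(E(f))). Then (∫_X ‖G(f) − N(f)‖² dμ(f))^{1/2} ≤ L_G·L_{RP}·(∫_X ‖D(E(f)) − f‖² dμ(f))^{1/2} + L_R·(∫_X ‖A(E(f)) − P(G(D(E(f))))‖² dμ(f))^{1/2} + (∫_X ‖R(P(G(f))) − G(f)‖² dμ(f))^{1/2}. -/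
/-!
Insert `R (P (G (D (E f))))` and `R (P (G f))` between `G f` and `N f = R (A (E f))`. The triangle
inequality splits `‖G f - N f‖` into a reconstruction error at `G f`, a term controlled by the
Lipschitz constants of `R ∘ P` and `G` times the encoding error `‖D (E f) - f‖`, and a term
controlled by the Lipschitz constant of `R` times the approximation error. Integrating the square of
this pointwise bound and applying Minkowski's inequality in `L²(μ)` gives the claim.
-/

open MeasureTheory

theorem dist_le_encoding_add_approximation_add_reconstruction
    {X Y Z : Type*} [PseudoMetricSpace X] [PseudoMetricSpace Y] [PseudoMetricSpace Z]
    {G : X → Y} {R : Z → Y} {P : Y → Z} {LG LR LRP : NNReal}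
    (hG : LipschitzWith LG G) (hR : LipschitzWith LR R) (hRP : LipschitzWith LRP (R ∘ P))
    (x x' : X) (z : Z) :
    dist (G x) (R z) ≤
      LG * LRP * dist x' x + LR * dist z (P (G x')) + dist (R (P (G x))) (G x) :=
  calc dist (G x) (R z)
      ≤ dist (G x) (R (P (G x))) + dist (R (P (G x))) (R (P (G x')))
          + dist (R (P (G x'))) (R z) :=
        dist_triangle4 _ _ _ _
    _ ≤ dist (R (P (G x))) (G x) + LRP * (LG * dist x x') + LR * dist (P (G x')) z := by
        rw [dist_comm (G x)]
        gcongr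
        · exact (hRP.dist_le_mul _ _).trans (by gcongr; exact hG.dist_le_mul _ _)
        · exact hR.dist_le_mul _ _
    _ = LG * LRP * dist x' x + LR * dist z (P (G x')) + dist (R (P (G x))) (G x) := by
        rw [dist_comm x, dist_comm z]; ring

section SqrtIntegralSq

variable {α : Type*} [MeasurableSpace α] {μ : Measure α}

theorem memLp_two_of_integrable_sq {u : α → ℝ} (hu₀ : 0 ≤ u)
    (hu : Integrable (fun x => u x ^ 2) μ) : MemLp u 2 μ := by
  have hu_eq : u = fun x => √(u x ^ 2) := funext fun x => (Real.sqrt_sq (hu₀ x)).symm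
  have hmeas : AEStronglyMeasurable u μ := by
    rw [hu_eq]
    exact Real.continuous_sqrt.comp_aestronglyMeasurable hu.aestronglyMeasurable
  exact (memLp_two_iff_integrable_sq hmeas).mpr hu

theorem sqrt_integral_sq_eq_toReal_eLpNorm {u : α → ℝ} (hu : MemLp u 2 μ) :
    √(∫ x, u x ^ 2 ∂μ) = (eLpNorm u 2 μ).toReal := by
  rw [hu.eLpNorm_eq_integral_rpow_norm two_ne_zero ENNReal.ofNat_ne_top,
    ENNReal.toReal_ofReal (by positivity), Real.sqrt_eq_rpow]
  simp

theorem sqrt_integral_sq_add_le {u v : α → ℝ} (hu : MemLp u 2 μ) (hv : MemLp v 2 μ) :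
    √(∫ x, (u x + v x) ^ 2 ∂μ) ≤ √(∫ x, u x ^ 2 ∂μ) + √(∫ x, v x ^ 2 ∂μ) := by
  rw [sqrt_integral_sq_eq_toReal_eLpNorm hu, sqrt_integral_sq_eq_toReal_eLpNorm hv,
    show (fun x => (u x + v x) ^ 2) = fun x => (u + v) x ^ 2 from rfl,
    sqrt_integral_sq_eq_toReal_eLpNorm (hu.add hv),
    ← ENNReal.toReal_add hu.eLpNorm_ne_top hv.eLpNorm_ne_top]
  exact ENNReal.toReal_mono
    (ENNReal.add_ne_top.mpr ⟨hu.eLpNorm_ne_top, hv.eLpNorm_ne_top⟩)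
    (eLpNorm_add_le hu.aestronglyMeasurable hv.aestronglyMeasurable one_le_two)

theorem sqrt_integral_sq_const_mul (c : ℝ) (u : α → ℝ) :
    √(∫ x, (c * u x) ^ 2 ∂μ) = |c| * √(∫ x, u x ^ 2 ∂μ) := by
  simp_rw [mul_pow]
  rw [integral_const_mul, Real.sqrt_mul (sq_nonneg c), Real.sqrt_sq_eq_abs]

theorem sqrt_integral_sq_mono {u v : α → ℝ} (hu₀ : 0 ≤ u) (huv : u ≤ v)
    (hv : Integrable (fun x => v x ^ 2) μ) :
    √(∫ x, u x ^ 2 ∂μ) ≤ √(∫ x, v x ^ 2 ∂μ) :=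
  Real.sqrt_le_sqrt <| integral_mono_of_nonneg (ae_of_all μ fun x => sq_nonneg (u x)) hv
    (ae_of_all μ fun x => pow_le_pow_left₀ (hu₀ x) (huv x) 2)

end SqrtIntegralSq

theorem stmt4_general {X Y : Type*} [NormedAddCommGroup X] [MeasurableSpace X] [NormedAddCommGroup Y]
    (μ : Measure X) (m p : ℕ)
    (G : X → Y) (R : EuclideanSpace ℝ (Fin p) → Y) (P : Y → EuclideanSpace ℝ (Fin p))
    (E : X → EuclideanSpace ℝ (Fin m)) (D : EuclideanSpace ℝ (Fin m) → X)
    (A : EuclideanSpace ℝ (Fin m) → EuclideanSpace ℝ (Fin p))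
    (LG LR LRP : NNReal)
    (hG : LipschitzWith LG G) (hR : LipschitzWith LR R) (hRP : LipschitzWith LRP (R ∘ P))
    (h2 : Integrable (fun f => ‖D (E f) - f‖ ^ 2) μ)
    (h3 : Integrable (fun f => ‖A (E f) - P (G (D (E f)))‖ ^ 2) μ)
    (h4 : Integrable (fun f => ‖R (P (G f)) - G f‖ ^ 2) μ) :
    Real.sqrt (∫ f, ‖G f - R (A (E f))‖ ^ 2 ∂μ)
      ≤ (LG : ℝ) * (LRP : ℝ) * Real.sqrt (∫ f, ‖D (E f) - f‖ ^ 2 ∂μ)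
        + (LR : ℝ) * Real.sqrt (∫ f, ‖A (E f) - P (G (D (E f)))‖ ^ 2 ∂μ)
        + Real.sqrt (∫ f, ‖R (P (G f)) - G f‖ ^ 2 ∂μ) := by
  set encoding := fun f => (LG * LRP : ℝ) * ‖D (E f) - f‖
  set approximation := fun f => (LR : ℝ) * ‖A (E f) - P (G (D (E f)))‖
  set reconstruction := fun f => ‖R (P (G f)) - G f‖
  have h_enc : MemLp encoding 2 μ :=
    (memLp_two_of_integrable_sq (fun _ => norm_nonneg _) h2).const_mul _
  have h_app : MemLp approximation 2 μ :=
    (memLp_two_of_integrable_sq (fun _ => norm_nonneg _) h3).const_mul _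
  have h_rec : MemLp reconstruction 2 μ :=
    memLp_two_of_integrable_sq (fun _ => norm_nonneg _) h4
  have h_pointwise :
      (fun f => ‖G f - R (A (E f))‖) ≤ encoding + approximation + reconstruction := fun f => by
    simpa only [encoding, approximation, reconstruction, Pi.add_apply, dist_eq_norm] using
      dist_le_encoding_add_approximation_add_reconstruction hG hR hRP f (D (E f)) (A (E f))
  calc √(∫ f, ‖G f - R (A (E f))‖ ^ 2 ∂μ)
      ≤ √(∫ f, (encoding f + approximation f + reconstruction f) ^ 2 ∂μ) :=
        sqrt_integral_sq_mono (fun _ => norm_nonneg _) h_pointwise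
          ((h_enc.add h_app).add h_rec).integrable_sq
    _ ≤ √(∫ f, (encoding f + approximation f) ^ 2 ∂μ)
          + √(∫ f, reconstruction f ^ 2 ∂μ) :=
        sqrt_integral_sq_add_le (h_enc.add h_app) h_rec
    _ ≤ √(∫ f, encoding f ^ 2 ∂μ) + √(∫ f, approximation f ^ 2 ∂μ)
          + √(∫ f, reconstruction f ^ 2 ∂μ) := by
        gcongr; exact sqrt_integral_sq_add_le h_enc h_app
    _ = _ := by
        simp only [encoding, approximation, reconstruction, sqrt_integral_sq_const_mul,
          abs_of_nonneg, NNReal.coe_nonneg, mul_nonneg]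

theorem stmt4 {X Y : Type*} [NormedAddCommGroup X] [NormedSpace ℝ X]
    [MeasurableSpace X] [BorelSpace X]
    [NormedAddCommGroup Y] [NormedSpace ℝ Y] [CompleteSpace Y]
    (μ : Measure X) [IsProbabilityMeasure μ]
    (m p : ℕ) (hm : 0 < m) (hp : 0 < p)
    (G : X → Y) (R : EuclideanSpace ℝ (Fin p) → Y) (P : Y → EuclideanSpace ℝ (Fin p))
    (E : X → EuclideanSpace ℝ (Fin m)) (D : EuclideanSpace ℝ (Fin m) → X)
    (A : EuclideanSpace ℝ (Fin m) → EuclideanSpace ℝ (Fin p))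
    (LG LR LRP : NNReal)
    (hG : LipschitzWith LG G) (hR : LipschitzWith LR R) (hRP : LipschitzWith LRP (R ∘ P))
    (hE : Measurable E) (hD : Measurable D) (hA : Measurable A)
    (h1 : Integrable (fun f => ‖G f - R (A (E f))‖ ^ 2) μ)
    (h2 : Integrable (fun f => ‖D (E f) - f‖ ^ 2) μ)
    (h3 : Integrable (fun f => ‖A (E f) - P (G (D (E f)))‖ ^ 2) μ)
    (h4 : Integrable (fun f => ‖R (P (G f)) - G f‖ ^ 2) μ) :
    Real.sqrt (∫ f, ‖G f - R (A (E f))‖ ^ 2 ∂μ)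
      ≤ (LG : ℝ) * (LRP : ℝ) * Real.sqrt (∫ f, ‖D (E f) - f‖ ^ 2 ∂μ)
        + (LR : ℝ) * Real.sqrt (∫ f, ‖A (E f) - P (G (D (E f)))‖ ^ 2 ∂μ)
        + Real.sqrt (∫ f, ‖R (P (G f)) - G f‖ ^ 2 ∂μ) :=
  stmt4_general μ m p G R P E D A LG LR LRP hG hR hRP h2 h3 h4
end

section
/- Let α > 0, 0 < ε ≤ 1, C ≥ 0, let J ≥ 2 be an even integer, set σ = min(1/2, 2ε·ln J / α), and let the Shishkin mesh points be x_j = j·h for 0 ≤ j ≤ J/2 and x_j = 1 − σ + (j − J/2)·H for J/2 ≤ j ≤ J, where h = 2(1−σ)/J and H = 2σ/J. Let (Ω, 𝔉, μ) be a probability space and let F : Ω × [0,1] → ℝ be jointly measurable such that for each ω ∈ Ω the function x ↦ F(ω, x) is continuously differentiable, the partial derivative ∂_x F is jointly measurable, and ∫_Ω |∂_x F(ω, x)| dμ(ω) ≤ C·(1 + ε^{−1}·e^{−α(1−x)/ε}) for every x ∈ [0,1]. Then ∫_Ω |∫₀¹ F(ω, x) dx − Σ_{j=1}^{J} (x_j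 − x_{j−1})·F(ω, x_j)| dμ(ω) ≤ 2C·(1 + 2/α)·(ln J)/J. -/
/-!
Integration by parts on a cell `[a, b]` gives `|∫_a^b f - (b - a) f(b)| ≤ ∫_a^b (t - a) |f'(t)| dt`.
Summing over the cells, taking expectations and exchanging the order of integration, the expected
error is at most `∑ᵢ ∫_{xᵢ}^{xᵢ₊₁} (t - xᵢ) C (1 + ε⁻¹ e^{-α(1-t)/ε}) dt`. Every cell of the
Shishkin mesh has width at most `2/J`, so the constant part contributes at most `C/J` and the layer
part at most `(2/J) C ∫_0^1 ε⁻¹ e^{-α(1-t)/ε} dt ≤ 2C/(αJ)`. The resulting bound `C (1 + 2/α)/J`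
is below the claimed one because `2 ln J ≥ 2 ln 2 ≥ 1`.
-/

open MeasureTheory Set

theorem abs_integral_sub_mul_le {f f' : ℝ → ℝ} {a b : ℝ} (hab : a ≤ b)
    (hf : ∀ t ∈ Icc a b, HasDerivAt f (f' t) t) (hf' : ContinuousOn f' (Icc a b)) :
    |(∫ t in a..b, f t) - (b - a) * f b| ≤ ∫ t in a..b, (t - a) * |f' t| := by
  rw [← uIcc_of_le hab] at hf hf'
  have hparts : ∫ t in a..b, (t - a) * f' t = (b - a) * f b - ∫ t in a..b, f t := by
    simpa using intervalIntegral.integral_mul_deriv_eq_deriv_mul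
      (fun t _ => (hasDerivAt_id t).sub_const a) hf intervalIntegrable_const
      hf'.intervalIntegrable
  calc |(∫ t in a..b, f t) - (b - a) * f b| = |∫ t in a..b, (t - a) * f' t| := by
        rw [hparts, abs_sub_comm]
    _ ≤ ∫ t in a..b, |(t - a) * f' t| := intervalIntegral.abs_integral_le_integral_abs hab
    _ = ∫ t in a..b, (t - a) * |f' t| := by
        refine intervalIntegral.integral_congr fun t ht => ?_
        rw [uIcc_of_le hab] at ht
        simp only [abs_mul, abs_of_nonneg (sub_nonneg.2 ht.1)]

theorem Icc_subset_Icc_of_le_succ {X : ℕ → ℝ} {n : ℕ} (hX : ∀ i < n, X i ≤ X (i + 1))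
    {i : ℕ} (hi : i < n) : Icc (X i) (X (i + 1)) ⊆ Icc (X 0) (X n) := by
  have hmono : MonotoneOn X (Iic n) :=
    monotoneOn_of_le_add_one ordConnected_Iic fun k _ _ hk => hX k hk
  exact Icc_subset_Icc (hmono (by simp) (by simp; omega) (by omega))
    (hmono (by simp; omega) (by simp) hi)

theorem sum_Icc_one_eq_sum_range {M : Type*} [AddCommMonoid M] (f : ℕ → M) (n : ℕ) :
    ∑ j ∈ Finset.Icc 1 n, f j = ∑ i ∈ Finset.range n, f (i + 1) := by
  rw [Finset.range_eq_Ico, Finset.sum_Ico_add', zero_add, Finset.Ico_add_one_right_eq_Icc]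

theorem abs_integral_sub_riemannSum_le {f f' : ℝ → ℝ} {X : ℕ → ℝ} {n : ℕ}
    (hX : ∀ i < n, X i ≤ X (i + 1))
    (hf : ∀ t ∈ Icc (X 0) (X n), HasDerivAt f (f' t) t)
    (hf' : ContinuousOn f' (Icc (X 0) (X n))) :
    |(∫ t in X 0..X n, f t) - ∑ j ∈ Finset.Icc 1 n, (X j - X (j - 1)) * f (X j)|
      ≤ ∑ i ∈ Finset.range n, ∫ t in X i..X (i + 1), (t - X i) * |f' t| := by
  have hcell := fun i (hi : i < n) => Icc_subset_Icc_of_le_succ hX hi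
  have hsplit : ∫ t in X 0..X n, f t = ∑ i ∈ Finset.range n, ∫ t in X i..X (i + 1), f t := by
    refine (intervalIntegral.sum_integral_adjacent_intervals fun i hi => ?_).symm
    refine ((HasDerivAt.continuousOn hf).mono ?_).intervalIntegrable
    rw [uIcc_of_le (hX i hi)]
    exact hcell i hi
  rw [hsplit, sum_Icc_one_eq_sum_range, ← Finset.sum_sub_distrib]
  refine (Finset.abs_sum_le_sum_abs _ _).trans (Finset.sum_le_sum fun i hi => ?_)
  rw [Finset.mem_range] at hi
  simpa using abs_integral_sub_mul_le (hX i hi) (fun t ht => hf t (hcell i hi ht))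
    (hf'.mono (hcell i hi))

section Fubini

variable {α β : Type*} [MeasurableSpace α] [MeasurableSpace β] {μ : Measure α} {ν : Measure β}
  [SFinite μ] [SFinite ν] {G : α × β → ℝ} {g : β → ℝ}

theorem integrable_prod_of_integral_le (hG : AEStronglyMeasurable G (μ.prod ν))
    (hG0 : ∀ᵐ y ∂ν, ∀ x, 0 ≤ G (x, y)) (hint : ∀ᵐ y ∂ν, Integrable (fun x => G (x, y)) μ)
    (hg : Integrable g ν) (hbound : ∀ᵐ y ∂ν, ∫ x, G (x, y) ∂μ ≤ g y) :
    Integrable G (μ.prod ν) := by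
  refine (integrable_prod_iff' hG).2
    ⟨hint, hg.mono' hG.norm.prod_swap.integral_prod_right' ?_⟩
  filter_upwards [hG0, hbound] with y hy0 hy
  simp only [Real.norm_eq_abs, abs_of_nonneg (hy0 _)]
  exact (abs_of_nonneg (integral_nonneg hy0)).trans_le hy

theorem integral_integral_le_of_integral_le (hG : AEStronglyMeasurable G (μ.prod ν))
    (hG0 : ∀ᵐ y ∂ν, ∀ x, 0 ≤ G (x, y)) (hint : ∀ᵐ y ∂ν, Integrable (fun x => G (x, y)) μ)
    (hg : Integrable g ν) (hbound : ∀ᵐ y ∂ν, ∫ x, G (x, y) ∂μ ≤ g y) :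
    ∫ x, ∫ y, G (x, y) ∂ν ∂μ ≤ ∫ y, g y ∂ν := by
  have hGint := integrable_prod_of_integral_le hG hG0 hint hg hbound
  rw [integral_integral_swap (f := fun x y => G (x, y)) hGint]
  exact integral_mono_ae hGint.integral_prod_right hg hbound

end Fubini

theorem integrable_and_integral_intervalIntegral_mul_abs_le {Ω : Type*} [MeasurableSpace Ω]
    {μ : Measure Ω} [SFinite μ] {F' : Ω × ℝ → ℝ} {g : ℝ → ℝ} {a b : ℝ} (hab : a ≤ b)
    (hF' : Measurable F') (hint : ∀ y ∈ Icc a b, Integrable (fun ω => F' (ω, y)) μ)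
    (hg : IntegrableOn g (Icc a b)) (hbound : ∀ y ∈ Icc a b, ∫ ω, |F' (ω, y)| ∂μ ≤ g y) :
    Integrable (fun ω => ∫ t in a..b, (t - a) * |F' (ω, t)|) μ ∧
      ∫ ω, (∫ t in a..b, (t - a) * |F' (ω, t)|) ∂μ ≤ ∫ t in a..b, (t - a) * g t := by
  simp only [intervalIntegral.integral_of_le hab]
  have hIoc : ∀ᵐ t ∂volume.restrict (Ioc a b), t ∈ Icc a b :=
    ae_restrict_of_forall_mem measurableSet_Ioc fun t ht => Ioc_subset_Icc_self ht
  have hG : AEStronglyMeasurable (fun p : Ω × ℝ => (p.2 - a) * |F' p|)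
      (μ.prod (volume.restrict (Ioc a b))) := by
    fun_prop
  have hG0 : ∀ᵐ t ∂volume.restrict (Ioc a b), ∀ ω, 0 ≤ (t - a) * |F' (ω, t)| := by
    filter_upwards [hIoc] with t ht ω
    exact mul_nonneg (sub_nonneg.2 ht.1) (abs_nonneg _)
  have hGint :
      ∀ᵐ t ∂volume.restrict (Ioc a b), Integrable (fun ω => (t - a) * |F' (ω, t)|) μ := by
    filter_upwards [hIoc] with t ht
    exact (hint t ht).abs.const_mul _
  have hwg : IntegrableOn (fun t => (t - a) * g t) (Ioc a b) :=
    (hg.mono_set Ioc_subset_Icc_self).continuousOn_mul_of_subset (by fun_prop) isCompact_Icc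
      measurableSet_Ioc Ioc_subset_Icc_self
  have hGbound :
      ∀ᵐ t ∂volume.restrict (Ioc a b), ∫ ω, (t - a) * |F' (ω, t)| ∂μ ≤ (t - a) * g t := by
    filter_upwards [hIoc] with t ht
    rw [integral_const_mul]
    exact mul_le_mul_of_nonneg_left (hbound t ht) (sub_nonneg.2 ht.1)
  exact ⟨(integrable_prod_of_integral_le hG hG0 hGint hwg hGbound).integral_prod_left,
    integral_integral_le_of_integral_le hG hG0 hGint hwg hGbound⟩

theorem integral_abs_integral_sub_riemannSum_le {Ω : Type*} [MeasurableSpace Ω]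
    (μ : Measure Ω) [SFinite μ] {X : ℕ → ℝ} {n : ℕ} (hX : ∀ i < n, X i ≤ X (i + 1))
    {F F' : Ω × ℝ → ℝ} (hF' : Measurable F')
    (hderiv : ∀ ω, ∀ y ∈ Icc (X 0) (X n), HasDerivAt (fun t => F (ω, t)) (F' (ω, y)) y)
    (hcont : ∀ ω, ContinuousOn (fun y => F' (ω, y)) (Icc (X 0) (X n)))
    (hint : ∀ y ∈ Icc (X 0) (X n), Integrable (fun ω => F' (ω, y)) μ)
    {g : ℝ → ℝ} (hg : IntegrableOn g (Icc (X 0) (X n)))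
    (hbound : ∀ y ∈ Icc (X 0) (X n), ∫ ω, |F' (ω, y)| ∂μ ≤ g y) :
    ∫ ω, |(∫ t in X 0..X n, F (ω, t))
        - ∑ j ∈ Finset.Icc 1 n, (X j - X (j - 1)) * F (ω, X j)| ∂μ
      ≤ ∑ i ∈ Finset.range n, ∫ t in X i..X (i + 1), (t - X i) * g t := by
  have hcell := fun i (hi : i ∈ Finset.range n) =>
    have hsub := Icc_subset_Icc_of_le_succ hX (Finset.mem_range.mp hi)
    integrable_and_integral_intervalIntegral_mul_abs_le (μ := μ)
      (hX i (Finset.mem_range.mp hi)) hF' (fun y hy => hint y (hsub hy)) (hg.mono_set hsub)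
      (fun y hy => hbound y (hsub hy))
  calc _ ≤ ∫ ω, (∑ i ∈ Finset.range n,
          ∫ t in X i..X (i + 1), (t - X i) * |F' (ω, t)|) ∂μ :=
        integral_mono_of_nonneg (.of_forall fun _ => abs_nonneg _)
          (integrable_finsetSum _ fun i hi => (hcell i hi).1)
          (.of_forall fun ω => abs_integral_sub_riemannSum_le hX (hderiv ω) (hcont ω))
    _ = ∑ i ∈ Finset.range n,
          ∫ ω, (∫ t in X i..X (i + 1), (t - X i) * |F' (ω, t)|) ∂μ :=
        integral_finsetSum _ fun i hi => (hcell i hi).1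
    _ ≤ _ := Finset.sum_le_sum fun i hi => (hcell i hi).2

theorem integral_sub_mul_one_add_le {k : ℝ → ℝ} {a b c d : ℝ} (hab : a ≤ b)
    (hbad : b - a ≤ d) (hc : 0 ≤ c) (hk0 : ∀ t ∈ Icc a b, 0 ≤ k t) (hk : ContinuousOn k (Icc a b)) :
    ∫ t in a..b, (t - a) * (c * (1 + k t)) ≤ c * d * ((b - a) / 2 + ∫ t in a..b, k t) := by
  have hk' : IntervalIntegrable k volume a b := hk.intervalIntegrable_of_Icc hab
  have hlin : IntervalIntegrable (fun t => t - a) volume a b :=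
    (continuous_id.sub continuous_const).intervalIntegrable a b
  calc ∫ t in a..b, (t - a) * (c * (1 + k t))
      ≤ ∫ t in a..b, (c * (t - a) + c * d * k t) := by
        refine intervalIntegral.integral_mono_on hab ?_ ?_ fun t ht => ?_
        · exact (ContinuousOn.intervalIntegrable_of_Icc hab (by fun_prop))
        · exact (hlin.const_mul c).add (hk'.const_mul _)
        · have := mul_le_mul_of_nonneg_right (by linarith [ht.2] : t - a ≤ d)
            (mul_nonneg hc (hk0 t ht))
          nlinarith
    _ = c * ((b - a) ^ 2 / 2) + c * d * ∫ t in a..b, k t := by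
        rw [intervalIntegral.integral_add (hlin.const_mul c) (hk'.const_mul _),
          intervalIntegral.integral_const_mul, intervalIntegral.integral_const_mul]
        simp only [intervalIntegral.integral_comp_sub_right fun t => t, sub_self, integral_id,
          ne_eq, OfNat.ofNat_ne_zero, not_false_eq_true, zero_pow, sub_zero]
    _ ≤ _ := by nlinarith [mul_le_mul_of_nonneg_left hbad (mul_nonneg hc (sub_nonneg.2 hab))]

theorem sum_integral_sub_mul_one_add_le {k : ℝ → ℝ} {X : ℕ → ℝ} {n : ℕ} {c d : ℝ}
    (hX : ∀ i < n, X i ≤ X (i + 1)) (hd : ∀ i < n, X (i + 1) - X i ≤ d) (hc : 0 ≤ c)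
    (hk0 : ∀ t ∈ Icc (X 0) (X n), 0 ≤ k t) (hk : ContinuousOn k (Icc (X 0) (X n))) :
    ∑ i ∈ Finset.range n, ∫ t in X i..X (i + 1), (t - X i) * (c * (1 + k t))
      ≤ c * d * ((X n - X 0) / 2 + ∫ t in X 0..X n, k t) := by
  have hcell := fun i (hi : i ∈ Finset.range n) =>
    Icc_subset_Icc_of_le_succ hX (Finset.mem_range.mp hi)
  calc _ ≤ ∑ i ∈ Finset.range n,
          c * d * ((X (i + 1) - X i) / 2 + ∫ t in X i..X (i + 1), k t) :=
        Finset.sum_le_sum fun i hi =>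
          integral_sub_mul_one_add_le (hX i (Finset.mem_range.mp hi))
            (hd i (Finset.mem_range.mp hi)) hc (fun t ht => hk0 t (hcell i hi ht))
            (hk.mono (hcell i hi))
    _ = _ := by
        rw [← Finset.mul_sum, Finset.sum_add_distrib, ← Finset.sum_div, Finset.sum_range_sub,
          intervalIntegral.sum_integral_adjacent_intervals fun i hi =>
            (hk.mono (hcell i (Finset.mem_range.mpr hi))).intervalIntegrable_of_Icc (hX i hi)]

theorem integral_inv_mul_exp_layer {α ε : ℝ} (hα : α ≠ 0) (hε : ε ≠ 0) (a b : ℝ) :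
    ∫ t in a..b, ε⁻¹ * Real.exp (-α * (1 - t) / ε)
      = (Real.exp (-α * (1 - b) / ε) - Real.exp (-α * (1 - a) / ε)) / α := by
  rw [sub_div]
  refine intervalIntegral.integral_eq_sub_of_hasDerivAt
    (f := fun t => Real.exp (-α * (1 - t) / ε) / α) (fun t _ => ?_)
    ((by fun_prop : Continuous fun t => ε⁻¹ * Real.exp (-α * (1 - t) / ε)).intervalIntegrable
      a b)
  refine ((((hasDerivAt_id' t).const_sub 1).const_mul (-α)).div_const ε).exp.div_const α
    |>.congr_deriv ?_
  field_simp

theorem integral_inv_mul_exp_layer_le {α ε : ℝ} (hα : 0 < α) (hε : 0 < ε) :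
    ∫ t in (0 : ℝ)..1, ε⁻¹ * Real.exp (-α * (1 - t) / ε) ≤ 1 / α := by
  rw [integral_inv_mul_exp_layer hα.ne' hε.ne']
  gcongr
  simp only [sub_self, mul_zero, zero_div, Real.exp_zero]
  linarith [Real.exp_pos (-α * (1 - 0) / ε)]

section ShishkinMesh

variable {J : ℕ} {σ h H : ℝ} {X : ℕ → ℝ}

theorem shishkin_step_mem_Icc (hσ0 : 0 ≤ σ) (hσ1 : σ ≤ 1) (hh : h = 2 * (1 - σ) / J)
    (hH : H = 2 * σ / J) (hX1 : ∀ j ≤ J / 2, X j = j * h)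
    (hX2 : ∀ j, J / 2 ≤ j → j ≤ J → X j = 1 - σ + ((j - J / 2 : ℕ) : ℝ) * H)
    {i : ℕ} (hi : i < J) : X (i + 1) - X i ∈ Icc (0 : ℝ) (2 / J) := by
  have hJ : (0 : ℝ) < J := by exact_mod_cast (by omega : 0 < J)
  have hstep : X (i + 1) - X i = 2 * (1 - σ) / J ∨ X (i + 1) - X i = 2 * σ / J := by
    rcases lt_or_ge i (J / 2) with hi' | hi'
    · left
      rw [hX1 (i + 1) hi', hX1 i hi'.le, hh]
      push_cast
      ring
    · right
      rw [hX2 (i + 1) (by omega) hi, hX2 i hi' hi.le, Nat.sub_add_comm hi', hH]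
      push_cast
      ring
  rcases hstep with hstep | hstep <;> rw [hstep] <;>
    exact ⟨div_nonneg (by linarith) hJ.le, div_le_div_of_nonneg_right (by linarith) hJ.le⟩

theorem shishkin_last_eq_one (hJe : Even J) (hJ : J ≠ 0) (hH : H = 2 * σ / J)
    (hX2 : ∀ j, J / 2 ≤ j → j ≤ J → X j = 1 - σ + ((j - J / 2 : ℕ) : ℝ) * H) : X J = 1 := by
  obtain ⟨K, rfl⟩ := hJe
  rw [hX2 _ (by omega) le_rfl, hH, show K + K - (K + K) / 2 = K by omega]
  have hK : (K : ℝ) ≠ 0 := by exact_mod_cast (by omega : K ≠ 0)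
  push_cast
  field_simp
  ring

end ShishkinMesh

theorem stmt7_general {Ω : Type*} [MeasurableSpace Ω] (μ : Measure Ω) [IsProbabilityMeasure μ]
    (α ε C : ℝ) (hα : 0 < α) (hε : 0 < ε) (hC : 0 ≤ C)
    (J : ℕ) (hJ : 2 ≤ J) (hJe : Even J)
    (σ h H : ℝ) (X : ℕ → ℝ)
    (hσ : σ = min (1 / 2) (2 * ε * Real.log J / α))
    (hh : h = 2 * (1 - σ) / J) (hH : H = 2 * σ / J)
    (hX1 : ∀ j ≤ J / 2, X j = j * h)
    (hX2 : ∀ j, J / 2 ≤ j → j ≤ J → X j = 1 - σ + ((j - J / 2 : ℕ) : ℝ) * H)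
    (F F' : Ω × ℝ → ℝ)
    (hF' : Measurable F')
    (hderiv : ∀ ω : Ω, ∀ y ∈ Icc (0:ℝ) 1, HasDerivAt (fun t => F (ω, t)) (F' (ω, y)) y)
    (hcont : ∀ ω : Ω, ContinuousOn (fun y => F' (ω, y)) (Icc (0:ℝ) 1))
    (hint : ∀ y ∈ Icc (0:ℝ) 1, Integrable (fun ω => F' (ω, y)) μ)
    (hbound : ∀ y ∈ Icc (0:ℝ) 1,
      ∫ ω, |F' (ω, y)| ∂μ ≤ C * (1 + ε⁻¹ * Real.exp (-α * (1 - y) / ε))) :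
    ∫ ω, |(∫ t in (0:ℝ)..1, F (ω, t))
        - ∑ j ∈ Finset.Icc 1 J, (X j - X (j - 1)) * F (ω, X j)| ∂μ
      ≤ 2 * C * (1 + 2 / α) * Real.log J / J := by
  have hσ0 : 0 ≤ σ :=
    hσ ▸ le_min (by norm_num) (by have := Real.log_natCast_nonneg J; positivity)
  have hσ1 : σ ≤ 1 := hσ ▸ (min_le_left _ _).trans (by norm_num)
  have hstep := fun i (hi : i < J) => shishkin_step_mem_Icc hσ0 hσ1 hh hH hX1 hX2 hi
  have hmono := fun i (hi : i < J) => sub_nonneg.1 (hstep i hi).1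
  have hX0 : X 0 = 0 := by simpa using hX1 0 (Nat.zero_le _)
  have hXJ : X J = 1 := shishkin_last_eq_one hJe (by omega) hH hX2
  have hI : Icc (X 0) (X J) = Icc 0 1 := by rw [hX0, hXJ]
  have hlog : 1 / 2 ≤ Real.log J := by
    have := Real.log_le_log (by norm_num) (by exact_mod_cast hJ : (2 : ℝ) ≤ J)
    linarith [Real.log_two_gt_d9]
  have hlayer :
      ContinuousOn (fun t => ε⁻¹ * Real.exp (-α * (1 - t) / ε)) (Icc (X 0) (X J)) := by
    fun_prop
  calc _ = ∫ ω, |(∫ t in X 0..X J, F (ω, t))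
        - ∑ j ∈ Finset.Icc 1 J, (X j - X (j - 1)) * F (ω, X j)| ∂μ := by rw [hX0, hXJ]
    _ ≤ ∑ i ∈ Finset.range J,
          ∫ t in X i..X (i + 1), (t - X i) * (C * (1 + ε⁻¹ * Real.exp (-α * (1 - t) / ε))) :=
        integral_abs_integral_sub_riemannSum_le μ hmono hF' (hI ▸ hderiv) (hI ▸ hcont)
          (hI ▸ hint) (hlayer.const_add 1 |>.const_mul C).integrableOn_Icc (hI ▸ hbound)
    _ ≤ C * (2 / J) *
          ((X J - X 0) / 2 + ∫ t in X 0..X J, ε⁻¹ * Real.exp (-α * (1 - t) / ε)) :=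
        sum_integral_sub_mul_one_add_le hmono (fun i hi => (hstep i hi).2) hC
          (fun t _ => by positivity) hlayer
    _ ≤ C * (2 / J) * (1 / 2 + 1 / α) := by
        rw [hX0, hXJ, sub_zero]
        gcongr
        exact integral_inv_mul_exp_layer_le hα hε
    _ = C * (1 + 2 / α) * 1 / J := by field_simp
    _ ≤ C * (1 + 2 / α) * (2 * Real.log J) / J := by gcongr; linarith
    _ = 2 * C * (1 + 2 / α) * Real.log J / J := by ring

theorem stmt7 {Ω : Type*} [MeasurableSpace Ω] (μ : Measure Ω) [IsProbabilityMeasure μ]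
    (α ε C : ℝ) (hα : 0 < α) (hε : 0 < ε) (hε1 : ε ≤ 1) (hC : 0 ≤ C)
    (J : ℕ) (hJ : 2 ≤ J) (hJe : Even J)
    (σ h H : ℝ) (X : ℕ → ℝ)
    (hσ : σ = min (1 / 2) (2 * ε * Real.log J / α))
    (hh : h = 2 * (1 - σ) / J) (hH : H = 2 * σ / J)
    (hX1 : ∀ j ≤ J / 2, X j = j * h)
    (hX2 : ∀ j, J / 2 ≤ j → j ≤ J → X j = 1 - σ + ((j - J / 2 : ℕ) : ℝ) * H)
    (F F' : Ω × ℝ → ℝ)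
    (hF : Measurable F) (hF' : Measurable F')
    (hderiv : ∀ ω : Ω, ∀ y ∈ Icc (0:ℝ) 1, HasDerivAt (fun t => F (ω, t)) (F' (ω, y)) y)
    (hcont : ∀ ω : Ω, ContinuousOn (fun y => F' (ω, y)) (Icc (0:ℝ) 1))
    (hint : ∀ y ∈ Icc (0:ℝ) 1, Integrable (fun ω => F' (ω, y)) μ)
    (hbound : ∀ y ∈ Icc (0:ℝ) 1,
      ∫ ω, |F' (ω, y)| ∂μ ≤ C * (1 + ε⁻¹ * Real.exp (-α * (1 - y) / ε))) :
    ∫ ω, |(∫ t in (0:ℝ)..1, F (ω, t))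
        - ∑ j ∈ Finset.Icc 1 J, (X j - X (j - 1)) * F (ω, X j)| ∂μ
      ≤ 2 * C * (1 + 2 / α) * Real.log J / J :=
  stmt7_general μ α ε C hα hε hC J hJ hJe σ h H X hσ hh hH hX1 hX2 F F' hF' hderiv hcont hint hbound
end

section
/- Let g : [0,1] → ℝ be continuously differentiable, let α > 0, 0 < ε ≤ 1, C ≥ 0, and suppose |g'(x)| ≤ C·(1 + ε^{−1}·e^{−α(1−x)/ε}) for all x ∈ [0,1]. Let J ≥ 2 be an even integer, set σ = min(1/2, 2ε·ln J / α), and let the Shishkin mesh points be x_j = j·h for 0 ≤ j ≤ J/2 and x_j = 1 − σ + (j − J/2)·H for J/2 ≤ j ≤ J, where h = 2(1−σ)/J and H = 2σ/J. Then |∫₀¹ g(x) dx − Σ_{j=1}^{J} (x_j − x_{j−1})·g(x_j)| ≤ 2C·(1 + 2/α)·(ln J)/J. -/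
/-!
Write `Φ t = (C / α) e^{-α (1 - t) / ε}`, so that the hypothesis reads `|g'| ≤ C + Φ'`.
Comparing `g` with `t ↦ C t + Φ t` by the mean value inequality shows that on a cell `[a, b]`
the right-endpoint rule errs by at most `C (b - a)² / 2 + (b - a) (Φ b - Φ a)`. On a block of
cells of equal width `w` the `Φ`-terms telescope, so the coarse and the fine part of the mesh
contribute at most `C (1 - σ) h / 2 + h Φ (1 - σ)` and `C σ H / 2 + H C / α`. The choice of `σ`
gives `2 (1 - σ) e^{-α σ / ε} ≤ 1` (either `σ = 1/2`, or `e^{-α σ / ε} = J⁻²`), hence a total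
of at most `(C + 2 C / α) / J`, and `ln J ≥ 1/2` for `J ≥ 2`.
-/

open MeasureTheory Set

theorem norm_sub_le_sub_of_norm_deriv_le {E : Type*} [NormedAddCommGroup E] [NormedSpace ℝ E]
    {f f' : ℝ → E} {F F' : ℝ → ℝ} {a b : ℝ} (hab : a ≤ b)
    (hf : ∀ y ∈ Icc a b, HasDerivAt f (f' y) y) (hF : ∀ y ∈ Icc a b, HasDerivAt F (F' y) y)
    (bound : ∀ y ∈ Icc a b, ‖f' y‖ ≤ F' y) : ‖f b - f a‖ ≤ F b - F a := by
  refine image_norm_le_of_norm_deriv_right_le_deriv_boundary' (f := fun y => f y - f a)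
    (B := fun y => F y - F a) (fun y hy => ((hf y hy).sub_const _).continuousAt.continuousWithinAt)
    (fun y hy => ((hf y (Ico_subset_Icc_self hy)).sub_const _).hasDerivWithinAt)
    (by simp) (fun y hy => ((hF y hy).sub_const _).continuousAt.continuousWithinAt)
    (fun y hy => ((hF y (Ico_subset_Icc_self hy)).sub_const _).hasDerivWithinAt)
    (fun y hy => bound y (Ico_subset_Icc_self hy)) (right_mem_Icc.2 hab)

theorem abs_integral_sub_right_endpoint_rule_le {f : ℝ → ℝ} {a b C K : ℝ} (hab : a ≤ b)
    (hf : IntervalIntegrable f volume a b)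
    (hK : ∀ t ∈ Icc a b, |f t - f b| ≤ C * (b - t) + K) :
    |(∫ t in a..b, f t) - (b - a) * f b| ≤ C * (b - a) ^ 2 / 2 + (b - a) * K := by
  have hlin : IntervalIntegrable (fun t => C * (b - t)) volume a b := by
    apply Continuous.intervalIntegrable; fun_prop
  calc |(∫ t in a..b, f t) - (b - a) * f b| = |∫ t in a..b, (f t - f b)| := by
        rw [intervalIntegral.integral_sub hf intervalIntegrable_const,
          intervalIntegral.integral_const, smul_eq_mul]
    _ ≤ ∫ t in a..b, |f t - f b| := intervalIntegral.abs_integral_le_integral_abs hab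
    _ ≤ ∫ t in a..b, (C * (b - t) + K) :=
        intervalIntegral.integral_mono_on hab (hf.sub intervalIntegrable_const).abs
          (hlin.add intervalIntegrable_const) hK
    _ = C * (b - a) ^ 2 / 2 + (b - a) * K := by
        rw [intervalIntegral.integral_add hlin intervalIntegrable_const,
          intervalIntegral.integral_const_mul, intervalIntegral.integral_comp_sub_left (fun t => t)]
        simp
        ring

theorem abs_integral_sub_right_endpoint_rule_le_of_abs_deriv_le {f f' ψ ψ' : ℝ → ℝ} {a b C : ℝ}
    (hab : a ≤ b) (hf : ∀ y ∈ Icc a b, HasDerivAt f (f' y) y)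
    (hψ : ∀ y ∈ Icc a b, HasDerivAt ψ (ψ' y) y) (hψ_mono : MonotoneOn ψ (Icc a b))
    (bound : ∀ y ∈ Icc a b, |f' y| ≤ C + ψ' y) :
    |(∫ t in a..b, f t) - (b - a) * f b| ≤ C * (b - a) ^ 2 / 2 + (b - a) * (ψ b - ψ a) := by
  have hf_cont : ContinuousOn f (Icc a b) := fun y hy => (hf y hy).continuousAt.continuousWithinAt
  refine abs_integral_sub_right_endpoint_rule_le hab (hf_cont.intervalIntegrable_of_Icc hab)
    fun t ht => ?_
  have hsub : Icc t b ⊆ Icc a b := Icc_subset_Icc_left ht.1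
  have hmean : |f b - f t| ≤ (C * b + ψ b) - (C * t + ψ t) :=
    norm_sub_le_sub_of_norm_deriv_le ht.2 (fun y hy => hf y (hsub hy))
      (fun y hy => ((hasDerivAt_id y).const_mul C).add (hψ y (hsub hy)) |>.congr_deriv (by simp))
      (fun y hy => bound y (hsub hy))
  have hψ_ta : ψ a ≤ ψ t := hψ_mono (left_mem_Icc.2 hab) ht ht.1
  rw [abs_sub_comm]
  linarith

theorem abs_integral_sub_uniform_right_riemann_sum_le {f f' ψ ψ' : ℝ → ℝ} {a b w C : ℝ} {m : ℕ}
    (hw : 0 ≤ w) (hm : m * w = b - a) (hf : ∀ y ∈ Icc a b, HasDerivAt f (f' y) y)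
    (hψ : ∀ y ∈ Icc a b, HasDerivAt ψ (ψ' y) y) (hψ_mono : MonotoneOn ψ (Icc a b))
    (bound : ∀ y ∈ Icc a b, |f' y| ≤ C + ψ' y) :
    |(∫ t in a..b, f t) - ∑ k ∈ Finset.range m, w * f (a + (k + 1) * w)|
      ≤ C * (b - a) * w / 2 + w * (ψ b - ψ a) := by
  set y : ℕ → ℝ := fun k => a + k * w with hy
  have hy_step : ∀ k, y (k + 1) = y k + w := fun k => by simp only [hy]; push_cast; ring
  have hy_mem : ∀ k ≤ m, y k ∈ Icc a b := fun k hk => by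
    have : (k : ℝ) * w ≤ m * w := by gcongr
    simp only [hy, mem_Icc]
    constructor <;> nlinarith
  have hcell : ∀ k < m, Icc (y k) (y (k + 1)) ⊆ Icc a b := fun k hk =>
    Icc_subset_Icc (hy_mem k hk.le).1 (hy_mem (k + 1) hk).2
  have hcell_err : ∀ k < m, |(∫ t in y k..y (k + 1), f t) - w * f (y (k + 1))|
      ≤ C * w ^ 2 / 2 + w * (ψ (y (k + 1)) - ψ (y k)) := fun k hk => by
    rw [hy_step]
    simpa only [hy_step, add_sub_cancel_left] using
      abs_integral_sub_right_endpoint_rule_le_of_abs_deriv_le (by rw [hy_step]; linarith)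
        (fun z hz => hf z (hcell k hk hz)) (fun z hz => hψ z (hcell k hk hz))
        (hψ_mono.mono (hcell k hk)) (fun z hz => bound z (hcell k hk hz))
  have hint : ∀ k < m, IntervalIntegrable f volume (y k) (y (k + 1)) := fun k hk =>
    ContinuousOn.intervalIntegrable_of_Icc (by rw [hy_step]; linarith)
      fun z hz => (hf z (hcell k hk hz)).continuousAt.continuousWithinAt
  have hy0 : y 0 = a := by simp [hy]
  have hym : y m = b := by simp only [hy]; linarith
  calc |(∫ t in a..b, f t) - ∑ k ∈ Finset.range m, w * f (a + (k + 1) * w)|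
      = |∑ k ∈ Finset.range m, ((∫ t in y k..y (k + 1), f t) - w * f (y (k + 1)))| := by
        rw [Finset.sum_sub_distrib, intervalIntegral.sum_integral_adjacent_intervals hint, hy0, hym]
        simp [hy]
    _ ≤ ∑ k ∈ Finset.range m, (C * w ^ 2 / 2 + w * (ψ (y (k + 1)) - ψ (y k))) :=
        (Finset.abs_sum_le_sum_abs _ _).trans
          (Finset.sum_le_sum fun k hk => hcell_err k (Finset.mem_range.1 hk))
    _ = C * (b - a) * w / 2 + w * (ψ b - ψ a) := by
        rw [Finset.sum_add_distrib, ← Finset.mul_sum, Finset.sum_range_sub (fun k => ψ (y k)),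
          Finset.sum_const, Finset.card_range, nsmul_eq_mul, ← hm, hy0, hym]
        ring

theorem sum_Icc_piecewise_uniform_mesh {x : ℕ → ℝ} {g : ℝ → ℝ} {J : ℕ} {h H c : ℝ}
    (hJe : Even J) (hx1 : ∀ j ≤ J / 2, x j = j * h)
    (hx2 : ∀ j, J / 2 ≤ j → j ≤ J → x j = c + ((j - J / 2 : ℕ) : ℝ) * H) :
    ∑ j ∈ Finset.Icc 1 J, (x j - x (j - 1)) * g (x j)
      = ∑ k ∈ Finset.range (J / 2), h * g ((k + 1) * h)
        + ∑ k ∈ Finset.range (J / 2), H * g (c + (k + 1) * H) := by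
  obtain ⟨n, rfl⟩ := hJe
  have hn : (n + n) / 2 = n := by omega
  rw [hn] at hx1 hx2 ⊢
  rw [← Finset.Ico_add_one_right_eq_Icc, Finset.sum_Ico_eq_sum_range, Nat.add_sub_cancel,
    Finset.sum_range_add]
  congr 1 <;> refine Finset.sum_congr rfl fun k hk => ?_ <;> rw [Finset.mem_range] at hk
  · rw [add_comm 1 k, Nat.add_sub_cancel, hx1 (k + 1) (by omega), hx1 k hk.le]
    push_cast
    ring_nf
  · rw [show 1 + (n + k) = n + (k + 1) by ring, show n + (k + 1) - 1 = n + k by omega,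
      hx2 _ (by omega) (by omega), hx2 (n + k) (by omega) (by omega)]
    simp only [Nat.add_sub_cancel_left]
    push_cast
    ring_nf

theorem shishkin_transition_mem_Icc {α ε σ : ℝ} {J : ℕ} (hα : 0 < α) (hε : 0 < ε) (hJ : 1 ≤ J)
    (hσ : σ = min (1 / 2) (2 * ε * Real.log J / α)) : σ ∈ Icc 0 (1 / 2) := by
  have hlog : 0 ≤ Real.log J := Real.log_nonneg (by exact_mod_cast hJ)
  subst hσ
  exact ⟨le_min (by norm_num) (by positivity), min_le_left _ _⟩

theorem two_mul_one_sub_mul_exp_le_one {α ε σ : ℝ} {J : ℕ} (hα : 0 < α) (hε : 0 < ε) (hJ : 2 ≤ J)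
    (hσ : σ = min (1 / 2) (2 * ε * Real.log J / α)) :
    2 * (1 - σ) * Real.exp (-α * σ / ε) ≤ 1 := by
  have hJ' : (2 : ℝ) ≤ J := by exact_mod_cast hJ
  obtain ⟨hσ0, -⟩ := shishkin_transition_mem_Icc hα hε (by omega) hσ
  rcases min_cases (1 / 2 : ℝ) (2 * ε * Real.log J / α) with ⟨hmin, -⟩ | ⟨hmin, -⟩
  · rw [hσ, hmin]
    have : Real.exp (-α * (1 / 2) / ε) ≤ 1 :=
      Real.exp_le_one_iff.2 (div_nonpos_of_nonpos_of_nonneg (by linarith) hε.le)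
    linarith
  · have hexp : Real.exp (-α * σ / ε) = ((J : ℝ) ^ 2)⁻¹ := by
      rw [hσ, hmin, show -α * (2 * ε * Real.log J / α) / ε = -(2 * Real.log J) by field_simp,
        Real.exp_neg, ← Real.log_rpow (by positivity), Real.exp_log (by positivity)]
      norm_cast
    have : ((J : ℝ) ^ 2)⁻¹ ≤ 1 / 4 := by
      rw [inv_eq_one_div]; gcongr; nlinarith
    rw [hexp]
    nlinarith [inv_nonneg.2 (sq_nonneg (J : ℝ))]

noncomputable def boundaryLayerPotential (α ε C t : ℝ) : ℝ :=
  C / α * Real.exp (-α * (1 - t) / ε)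

theorem hasDerivAt_boundaryLayerPotential {α ε C : ℝ} (hα : α ≠ 0) (t : ℝ) :
    HasDerivAt (boundaryLayerPotential α ε C) (C * ε⁻¹ * Real.exp (-α * (1 - t) / ε)) t := by
  have hlin : HasDerivAt (fun u : ℝ => -α * (1 - u) / ε) (α / ε) t := by
    simpa using (((hasDerivAt_id t).const_sub 1).const_mul (-α)).div_const ε
  refine (hlin.exp.const_mul (C / α)).congr_deriv ?_
  field_simp

theorem monotone_boundaryLayerPotential {α ε C : ℝ} (hα : 0 < α) (hε : 0 < ε) (hC : 0 ≤ C) :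
    Monotone (boundaryLayerPotential α ε C) := fun s t hst => by
  unfold boundaryLayerPotential
  have : -α * (1 - s) / ε ≤ -α * (1 - t) / ε := div_le_div_of_nonneg_right (by nlinarith) hε.le
  gcongr

theorem shishkin_block_bounds_le {α ε C σ h H : ℝ} {J : ℕ} (hα : 0 < α) (hε : 0 < ε)
    (hC : 0 ≤ C) (hJ : 2 ≤ J) (hσ : σ = min (1 / 2) (2 * ε * Real.log J / α))
    (hh : h = 2 * (1 - σ) / J) (hH : H = 2 * σ / J) :
    C * (1 - σ) * h / 2
        + h * (boundaryLayerPotential α ε C (1 - σ) - boundaryLayerPotential α ε C 0)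
      + (C * σ * H / 2
        + H * (boundaryLayerPotential α ε C 1 - boundaryLayerPotential α ε C (1 - σ)))
      ≤ 2 * C * (1 + 2 / α) * Real.log J / J := by
  have hJpos : (0 : ℝ) < J := by positivity
  have hlog : 1 / 2 ≤ Real.log J := by
    have := Real.log_two_gt_d9
    have := Real.log_le_log two_pos (by exact_mod_cast hJ : (2 : ℝ) ≤ J)
    linarith
  obtain ⟨hσ0, hσ_half⟩ := shishkin_transition_mem_Icc hα hε (by omega) hσ
  have hexp := two_mul_one_sub_mul_exp_le_one hα hε hJ hσ
  set e := Real.exp (-α * σ / ε)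
  have hΦ0 : 0 ≤ boundaryLayerPotential α ε C 0 := by unfold boundaryLayerPotential; positivity
  have hΦσ : boundaryLayerPotential α ε C (1 - σ) = C / α * e := by
    simp only [boundaryLayerPotential, sub_sub_cancel, e]
  have hΦ1 : boundaryLayerPotential α ε C 1 = C / α := by simp [boundaryLayerPotential]
  have hCα : 0 ≤ C / α := by positivity
  calc _ = (C * ((1 - σ) ^ 2 + σ ^ 2) + C / α * (2 * (1 - σ) * e + 2 * σ)) / J
          - (2 * (1 - σ) * boundaryLayerPotential α ε C 0 + 2 * σ * (C / α * e)) / J := by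
        rw [hΦσ, hΦ1, hh, hH]
        field_simp
        ring
    _ ≤ (C * 1 + C / α * 2) / J := by
        have hΦ0' : 0 ≤ (1 - σ) * boundaryLayerPotential α ε C 0 :=
          mul_nonneg (by linarith) hΦ0
        have he : 0 ≤ σ * (C / α * e) := mul_nonneg hσ0 (mul_nonneg hCα (Real.exp_nonneg _))
        refine (sub_le_self _ (div_nonneg (by linarith) hJpos.le)).trans ?_
        gcongr
        · nlinarith
        · linarith
    _ ≤ 2 * C * (1 + 2 / α) * Real.log J / J := by
        rw [show 2 * C * (1 + 2 / α) * Real.log J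
          = C * (2 * Real.log J) + C / α * (4 * Real.log J) by ring]
        gcongr <;> linarith

theorem stmt9_general (g g' : ℝ → ℝ) (α ε C : ℝ) (hα : 0 < α) (hε : 0 < ε) (hC : 0 ≤ C)
    (hderiv : ∀ y ∈ Icc (0:ℝ) 1, HasDerivAt g (g' y) y)
    (hbound : ∀ y ∈ Icc (0:ℝ) 1, |g' y| ≤ C * (1 + ε⁻¹ * Real.exp (-α * (1 - y) / ε)))
    (J : ℕ) (hJ : 2 ≤ J) (hJe : Even J)
    (σ h H : ℝ) (x : ℕ → ℝ)
    (hσ : σ = min (1 / 2) (2 * ε * Real.log J / α))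
    (hh : h = 2 * (1 - σ) / J) (hH : H = 2 * σ / J)
    (hx1 : ∀ j ≤ J / 2, x j = j * h)
    (hx2 : ∀ j, J / 2 ≤ j → j ≤ J → x j = 1 - σ + ((j - J / 2 : ℕ) : ℝ) * H) :
    |(∫ t in (0:ℝ)..1, g t) - ∑ j ∈ Finset.Icc 1 J, (x j - x (j - 1)) * g (x j)|
      ≤ 2 * C * (1 + 2 / α) * Real.log J / J := by
  obtain ⟨hσ0, hσ_half⟩ := shishkin_transition_mem_Icc hα hε (by omega) hσ
  have hn : ((J / 2 : ℕ) : ℝ) = J / 2 := Nat.cast_div hJe.two_dvd two_ne_zero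
  have hJ0 : (J : ℝ) ≠ 0 := by positivity
  have hg_cont : ContinuousOn g (Icc 0 1) := fun y hy =>
    (hderiv y hy).continuousAt.continuousWithinAt
  have hg' : ∀ y ∈ Icc (0:ℝ) 1, |g' y| ≤ C + C * ε⁻¹ * Real.exp (-α * (1 - y) / ε) :=
    fun y hy => (hbound y hy).trans_eq (by ring)
  have hΦ := hasDerivAt_boundaryLayerPotential (ε := ε) (C := C) hα.ne'
  have hΦ_mono := monotone_boundaryLayerPotential hα hε hC
  have hcoarse : Icc 0 (1 - σ) ⊆ Icc (0:ℝ) 1 := Icc_subset_Icc le_rfl (by linarith)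
  have hfine : Icc (1 - σ) 1 ⊆ Icc (0:ℝ) 1 := Icc_subset_Icc (by linarith) le_rfl
  have coarse := abs_integral_sub_uniform_right_riemann_sum_le (m := J / 2) (w := h)
    (by rw [hh]; exact div_nonneg (by linarith) (Nat.cast_nonneg J))
    (by rw [hn, hh]; field_simp; ring) (fun y hy => hderiv y (hcoarse hy)) (fun y _ => hΦ y)
    (hΦ_mono.monotoneOn _) (fun y hy => hg' y (hcoarse hy))
  have fine := abs_integral_sub_uniform_right_riemann_sum_le (m := J / 2) (w := H)
    (by rw [hH]; positivity) (by rw [hn, hH]; field_simp; ring)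
    (fun y hy => hderiv y (hfine hy)) (fun y _ => hΦ y)
    (hΦ_mono.monotoneOn _) (fun y hy => hg' y (hfine hy))
  simp only [zero_add, sub_zero, sub_sub_cancel] at coarse fine
  rw [sum_Icc_piecewise_uniform_mesh hJe hx1 hx2,
    ← intervalIntegral.integral_add_adjacent_intervals
      ((hg_cont.mono hcoarse).intervalIntegrable_of_Icc (by linarith))
      ((hg_cont.mono hfine).intervalIntegrable_of_Icc (by linarith)), add_sub_add_comm]
  exact (abs_add_le _ _).trans ((add_le_add coarse fine).trans
    (shishkin_block_bounds_le hα hε hC hJ hσ hh hH))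

theorem stmt9 (g g' : ℝ → ℝ) (α ε C : ℝ) (hα : 0 < α) (hε : 0 < ε) (hε1 : ε ≤ 1) (hC : 0 ≤ C)
    (hderiv : ∀ y ∈ Icc (0:ℝ) 1, HasDerivAt g (g' y) y)
    (hcont : ContinuousOn g' (Icc (0:ℝ) 1))
    (hbound : ∀ y ∈ Icc (0:ℝ) 1, |g' y| ≤ C * (1 + ε⁻¹ * Real.exp (-α * (1 - y) / ε)))
    (J : ℕ) (hJ : 2 ≤ J) (hJe : Even J)
    (σ h H : ℝ) (x : ℕ → ℝ)
    (hσ : σ = min (1 / 2) (2 * ε * Real.log J / α))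
    (hh : h = 2 * (1 - σ) / J) (hH : H = 2 * σ / J)
    (hx1 : ∀ j ≤ J / 2, x j = j * h)
    (hx2 : ∀ j, J / 2 ≤ j → j ≤ J → x j = 1 - σ + ((j - J / 2 : ℕ) : ℝ) * H) :
    |(∫ t in (0:ℝ)..1, g t) - ∑ j ∈ Finset.Icc 1 J, (x j - x (j - 1)) * g (x j)|
      ≤ 2 * C * (1 + 2 / α) * Real.log J / J :=
  stmt9_general g g' α ε C hα hε hC hderiv hbound J hJ hJe σ h H x hσ hh hH hx1 hx2
end

section
/- Let N ≥ 1 and let X₁, …, X_N be independent, identically distributed nonnegative real-valued random variables on a probability space, with 𝔼[X₁²] < ∞. Let S = (1/N)·Σ_{n=1}^N X_n. Then 𝔼|√S − √(𝔼 X₁)| ≤ N^{−1/4}·(𝔼[(X₁ − 𝔼X₁)²])^{1/4} ≤ N^{−1/4}·((𝔼[X₁²])^{1/4} + (𝔼 X₁)^{1/2}). -/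
/-!
With `m = 𝔼 X₁` and `S` the empirical mean, pointwise `|√S - √m| ≤ √|S - m|`. Two applications
of `𝔼 g ≤ √(𝔼 g²)` then give `𝔼 √|S - m| ≤ √(𝔼 |S - m|) ≤ (𝔼 (S - m)²) ^ (1/4) = (Var S) ^ (1/4)`,
and for an empirical mean of `N` independent copies `Var S = Var X₁ / N`.
-/

open MeasureTheory ProbabilityTheory

theorem Real.abs_sqrt_sub_sqrt_le_sqrt_abs_sub {a b : ℝ} (ha : 0 ≤ a) (hb : 0 ≤ b) :
    |√a - √b| ≤ √|a - b| := by
  refine Real.abs_le_sqrt ?_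
  have hfactor : a - b = (√a + √b) * (√a - √b) := by
    rw [← sq_sub_sq, Real.sq_sqrt ha, Real.sq_sqrt hb]
  calc (√a - √b) ^ 2 = |√a - √b| * |√a - √b| := by rw [abs_mul_abs_self, sq]
    _ ≤ |√a - √b| * (√a + √b) := by
        gcongr
        exact abs_sub_le_iff.2
          ⟨by linarith [Real.sqrt_nonneg b], by linarith [Real.sqrt_nonneg a]⟩
    _ = |a - b| := by
        rw [hfactor, abs_mul, abs_of_nonneg (by positivity : 0 ≤ √a + √b), mul_comm]

namespace ProbabilityTheory

variable {Ω : Type*} [MeasurableSpace Ω] {μ : Measure Ω}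

theorem variance_sum_of_identDistrib {ι Ω' : Type*} [MeasurableSpace Ω'] {ν : Measure Ω'}
    {X : ι → Ω → ℝ} {Y : Ω' → ℝ} (s : Finset ι) (hY : MemLp Y 2 ν)
    (hident : ∀ i, IdentDistrib (X i) Y μ ν) (hindep : Pairwise fun i j => X i ⟂ᵢ[μ] X j) :
    Var[fun ω => ∑ i ∈ s, X i ω; μ] = s.card * Var[Y; ν] := by
  have hX (i : ι) : MemLp (X i) 2 μ := (hident i).memLp_iff.2 hY
  rw [← Finset.sum_fn, IndepFun.variance_sum (fun i _ => hX i) (fun i _ j _ hij => hindep hij)]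
  simp [(hident _).variance_eq]

variable [IsProbabilityMeasure μ]

theorem integral_le_sqrt_integral_sq {g : Ω → ℝ} (hg : MemLp g 2 μ) :
    μ[g] ≤ √(∫ ω, g ω ^ 2 ∂μ) := by
  have hsq : μ[g] ^ 2 ≤ ∫ ω, g ω ^ 2 ∂μ := by
    have := variance_nonneg g μ
    rwa [variance_eq_sub hg, sub_nonneg] at this
  exact (le_abs_self _).trans (Real.abs_le_sqrt hsq)

theorem integral_abs_sqrt_sub_sqrt_integral_le {Y : Ω → ℝ} (hY : MemLp Y 2 μ)
    (hY_nonneg : 0 ≤ᵐ[μ] Y) :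
    ∫ ω, |√(Y ω) - √(μ[Y])| ∂μ ≤ Var[Y; μ] ^ (1 / 4 : ℝ) := by
  set m := μ[Y]
  have hdev : MemLp (fun ω => |Y ω - m|) 2 μ := (hY.sub (memLp_const m)).abs
  have hsqrt_dev : MemLp (fun ω => √|Y ω - m|) 2 μ := by
    refine (memLp_two_iff_integrable_sq
      (Real.continuous_sqrt.comp_aestronglyMeasurable hdev.1)).2 ?_
    simpa only [Real.sq_sqrt (abs_nonneg _)] using hdev.integrable one_le_two
  calc ∫ ω, |√(Y ω) - √m| ∂μ ≤ ∫ ω, √|Y ω - m| ∂μ := by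
        refine integral_mono_of_nonneg (.of_forall fun _ => abs_nonneg _)
          (hsqrt_dev.integrable one_le_two) ?_
        filter_upwards [hY_nonneg] with ω hω
        exact Real.abs_sqrt_sub_sqrt_le_sqrt_abs_sub hω (integral_nonneg_of_ae hY_nonneg)
    _ ≤ √(∫ ω, |Y ω - m| ∂μ) := by
        simpa only [Real.sq_sqrt (abs_nonneg _)] using integral_le_sqrt_integral_sq hsqrt_dev
    _ ≤ √√(∫ ω, (Y ω - m) ^ 2 ∂μ) := by
        gcongr
        simpa only [sq_abs] using integral_le_sqrt_integral_sq hdev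
    _ = Var[Y; μ] ^ (1 / 4 : ℝ) := by
        rw [← variance_eq_integral hY.aemeasurable, Real.sqrt_eq_rpow, Real.sqrt_eq_rpow,
          ← Real.rpow_mul (variance_nonneg Y μ)]
        norm_num

end ProbabilityTheory

theorem stmt10_general {Ω : Type*} [MeasurableSpace Ω] (μ : Measure Ω) [IsProbabilityMeasure μ]
    (N : ℕ) (hN : 1 ≤ N) (X : Fin N → Ω → ℝ)
    (hindep : iIndepFun X μ)
    (hident : ∀ n, IdentDistrib (X n) (X ⟨0, hN⟩) μ μ)
    (hnonneg : ∀ n ω, 0 ≤ X n ω)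
    (hL2 : Integrable (fun ω => (X ⟨0, hN⟩ ω) ^ 2) μ) :
    (∫ ω, |Real.sqrt ((1 / N : ℝ) * ∑ n, X n ω) - Real.sqrt (∫ ω', X ⟨0, hN⟩ ω' ∂μ)| ∂μ
        ≤ (N : ℝ) ^ (-(1 / 4 : ℝ))
          * (∫ ω, (X ⟨0, hN⟩ ω - ∫ ω', X ⟨0, hN⟩ ω' ∂μ) ^ 2 ∂μ) ^ ((1 : ℝ) / 4)) ∧
    ((N : ℝ) ^ (-(1 / 4 : ℝ))
        * (∫ ω, (X ⟨0, hN⟩ ω - ∫ ω', X ⟨0, hN⟩ ω' ∂μ) ^ 2 ∂μ) ^ ((1 : ℝ) / 4)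
      ≤ (N : ℝ) ^ (-(1 / 4 : ℝ))
        * ((∫ ω, (X ⟨0, hN⟩ ω) ^ 2 ∂μ) ^ ((1 : ℝ) / 4)
          + (∫ ω, X ⟨0, hN⟩ ω ∂μ) ^ ((1 : ℝ) / 2))) := by
  set X₀ := X ⟨0, hN⟩
  have hX₀ : MemLp X₀ 2 μ :=
    (memLp_two_iff_integrable_sq (hident ⟨0, hN⟩).aemeasurable_snd.aestronglyMeasurable).2 hL2
  have hX (n : Fin N) : MemLp (X n) 2 μ := (hident n).memLp_iff.2 hX₀
  set S : Ω → ℝ := fun ω => (1 / N : ℝ) * ∑ n, X n ω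
  have hS : MemLp S 2 μ := (memLp_finsetSum _ fun n _ => hX n).const_mul _
  have hN₀ : (N : ℝ) ≠ 0 := by positivity
  have hS_nonneg : 0 ≤ᵐ[μ] S := .of_forall fun ω =>
    mul_nonneg (by positivity) (Finset.sum_nonneg fun n _ => hnonneg n ω)
  have hS_mean : μ[S] = μ[X₀] := by
    rw [integral_const_mul, integral_finsetSum _ fun n _ => (hX n).integrable one_le_two,
      Finset.sum_congr rfl fun n _ => (hident n).integral_eq, Finset.sum_const, Finset.card_univ,
      Fintype.card_fin, nsmul_eq_mul]
    field_simp
  have hS_var : Var[S; μ] = Var[X₀; μ] / N := by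
    rw [variance_const_mul,
      variance_sum_of_identDistrib _ hX₀ hident fun i j hij => hindep.indepFun hij,
      Finset.card_univ, Fintype.card_fin]
    field_simp
  rw [← variance_eq_integral hX₀.aemeasurable]
  constructor
  · calc _ ≤ Var[S; μ] ^ (1 / 4 : ℝ) :=
          hS_mean ▸ integral_abs_sqrt_sub_sqrt_integral_le hS hS_nonneg
      _ = _ := by
        rw [hS_var, Real.div_rpow (variance_nonneg _ _) N.cast_nonneg,
          Real.rpow_neg N.cast_nonneg]
        ring_nf
  · gcongr
    calc Var[X₀; μ] ^ (1 / 4 : ℝ) ≤ (∫ ω, X₀ ω ^ 2 ∂μ) ^ (1 / 4 : ℝ) := by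
          gcongr
          · exact variance_nonneg _ _
          · exact variance_le_expectation_sq hX₀.1
      _ ≤ _ := le_add_of_nonneg_right (Real.rpow_nonneg (integral_nonneg (hnonneg _)) _)

theorem stmt10 {Ω : Type*} [MeasurableSpace Ω] (μ : Measure Ω) [IsProbabilityMeasure μ]
    (N : ℕ) (hN : 1 ≤ N) (X : Fin N → Ω → ℝ)
    (hindep : iIndepFun X μ)
    (hident : ∀ n, IdentDistrib (X n) (X ⟨0, hN⟩) μ μ)
    (hmeas : ∀ n, Measurable (X n))
    (hnonneg : ∀ n ω, 0 ≤ X n ω)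
    (hL2 : Integrable (fun ω => (X ⟨0, hN⟩ ω) ^ 2) μ) :
    (∫ ω, |Real.sqrt ((1 / N : ℝ) * ∑ n, X n ω) - Real.sqrt (∫ ω', X ⟨0, hN⟩ ω' ∂μ)| ∂μ
        ≤ (N : ℝ) ^ (-(1 / 4 : ℝ))
          * (∫ ω, (X ⟨0, hN⟩ ω - ∫ ω', X ⟨0, hN⟩ ω' ∂μ) ^ 2 ∂μ) ^ ((1 : ℝ) / 4)) ∧
    ((N : ℝ) ^ (-(1 / 4 : ℝ))
        * (∫ ω, (X ⟨0, hN⟩ ω - ∫ ω', X ⟨0, hN⟩ ω' ∂μ) ^ 2 ∂μ) ^ ((1 : ℝ) / 4)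
      ≤ (N : ℝ) ^ (-(1 / 4 : ℝ))
        * ((∫ ω, (X ⟨0, hN⟩ ω) ^ 2 ∂μ) ^ ((1 : ℝ) / 4)
          + (∫ ω, X ⟨0, hN⟩ ω ∂μ) ^ ((1 : ℝ) / 2))) :=
  stmt10_general μ N hN X hindep hident hnonneg hL2
end

section
/- For every natural number q ≥ 1 there exists a constant C_q ≥ 0 such that the following holds: for every separable real Hilbert space H and every centered Gaussian Borel probability measure γ on H, ∫_H ‖x‖^{2q} dγ(x) ≤ C_q·(∫_H ‖x‖² dγ(x))^q. -/
open MeasureTheory ProbabilityTheory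

universe u

/-- A centered Gaussian Borel probability measure on a Hilbert space: every pushforward
under a continuous linear functional is a centered Gaussian distribution on `ℝ`. -/
def IsCenteredGaussianMeasure {H : Type u} [NormedAddCommGroup H] [InnerProductSpace ℝ H]
    [MeasurableSpace H] (γ : Measure H) : Prop :=
  IsProbabilityMeasure γ ∧ ∀ L : H →L[ℝ] ℝ, ∃ v : NNReal, γ.map L = gaussianReal 0 v

/-!
Expand `x` in a Hilbert basis `(bᵢ)`, countable by separability. Each coordinate `⟪bᵢ, ·⟫` has law
`N(0, vᵢ)` under `γ`, so in `L^q(γ)` the function `⟪bᵢ, ·⟫²` has norm `vᵢ c_q`, where `c_q` is the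
`L^q` norm of `t ↦ t²` under the standard Gaussian (and `c₁ = 1`). Minkowski's inequality applied
to the series `‖x‖² = ∑ᵢ ⟪bᵢ, x⟫²` gives `‖‖·‖²‖_{L^q(γ)} ≤ c_q ∑ᵢ vᵢ = c_q ∫ ‖x‖² dγ`, that is,
the claim with `C_q = c_q ^ q`.
-/

open scoped ENNReal NNReal InnerProductSpace

theorem ENNReal.iSup_rpow {ι : Type*} (g : ι → ℝ≥0∞) {r : ℝ} (hr : 0 < r) :
    (⨆ i, g i) ^ r = ⨆ i, g i ^ r :=
  (ENNReal.orderIsoRpow r hr).map_iSup g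

section

variable {α : Type*} [MeasurableSpace α] {μ : Measure α}

theorem eLpNorm_iSup_le {ι : Type*} [Countable ι] {p : ℝ≥0∞} {f : ι → α → ℝ≥0∞}
    (hf : ∀ i, Measurable (f i)) (hdir : Directed (· ≤ ·) f) (hp0 : p ≠ 0) (hp : p ≠ ∞) :
    eLpNorm (fun x ↦ ⨆ i, f i x) p μ ≤ ⨆ i, eLpNorm (f i) p μ := by
  have hr : 0 < p.toReal := ENNReal.toReal_pos hp0 hp
  have hdir' : Directed (· ≤ ·) fun i x ↦ f i x ^ p.toReal :=
    fun i j ↦ (hdir i j).imp fun _ h ↦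
      ⟨fun x ↦ ENNReal.rpow_le_rpow (h.1 x) hr.le, fun x ↦ ENNReal.rpow_le_rpow (h.2 x) hr.le⟩
  simp only [eLpNorm_eq_lintegral_rpow_enorm_toReal hp0 hp, enorm_eq_self, ENNReal.iSup_rpow _ hr,
    lintegral_iSup_directed_of_measurable (fun i ↦ (hf i).pow_const _) hdir',
    ENNReal.iSup_rpow _ (one_div_pos.2 hr), le_refl]

theorem eLpNorm_tsum_le {ι : Type*} [Countable ι] {p : ℝ≥0∞} {f : ι → α → ℝ≥0∞}
    (hf : ∀ i, Measurable (f i)) (hp : 1 ≤ p) (hp' : p ≠ ∞) :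
    eLpNorm (fun x ↦ ∑' i, f i x) p μ ≤ ∑' i, eLpNorm (f i) p μ := by
  simp_rw [ENNReal.tsum_eq_iSup_sum]
  refine (eLpNorm_iSup_le (fun s ↦ Finset.measurable_sum s fun i _ ↦ hf i)
    (Monotone.directed_le fun s t hst x ↦ Finset.sum_le_sum_of_subset hst)
    (zero_lt_one.trans_le hp).ne' hp').trans (iSup_mono fun s ↦ ?_)
  have := eLpNorm_sum_le (fun i _ ↦ (hf i).aestronglyMeasurable) hp (μ := μ) (s := s) (f := f)
  rwa [Finset.sum_fn] at this

theorem integral_pow_eq_toReal_eLpNorm_pow {f : α → ℝ} (hf : AEStronglyMeasurable f μ)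
    (hf0 : 0 ≤ f) {n : ℕ} (hn : n ≠ 0) :
    ∫ x, f x ^ n ∂μ = (eLpNorm f n μ ^ n).toReal := by
  have h := eLpNorm_nnreal_pow_eq_lintegral (f := f) (μ := μ) (p := n) (by exact_mod_cast hn)
  simp only [ENNReal.coe_natCast, NNReal.coe_natCast, ENNReal.rpow_natCast] at h
  rw [integral_eq_lintegral_of_nonneg_ae (.of_forall fun x ↦ pow_nonneg (hf0 x) n) (hf.pow n), h]
  congr 1
  refine lintegral_congr fun x ↦ ?_
  rw [ENNReal.ofReal_pow (hf0 x), Real.enorm_of_nonneg (hf0 x)]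

theorem integral_pow_le_of_eLpNorm_le [IsProbabilityMeasure μ] {f : α → ℝ}
    (hf : AEStronglyMeasurable f μ) (hf0 : 0 ≤ f) {n : ℕ} (hn : 1 ≤ n) {C : ℝ≥0∞} (hC : C ≠ ∞)
    (h : eLpNorm f n μ ≤ C * eLpNorm f 1 μ) :
    ∫ x, f x ^ n ∂μ ≤ C.toReal ^ n * (∫ x, f x ∂μ) ^ n := by
  have hint_one : ∫ x, f x ∂μ = (eLpNorm f 1 μ).toReal := by
    simpa using integral_pow_eq_toReal_eLpNorm_pow hf hf0 one_ne_zero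
  rw [integral_pow_eq_toReal_eLpNorm_pow hf hf0 (by omega), hint_one]
  by_cases h1 : eLpNorm f 1 μ = ∞
  · have hn' : eLpNorm f n μ = ∞ :=
      eq_top_mono (eLpNorm_le_eLpNorm_of_exponent_le (by exact_mod_cast hn) hf) h1
    simp [hn', h1, zero_pow (by omega : n ≠ 0)]
  · calc (eLpNorm f n μ ^ n).toReal ≤ ((C * eLpNorm f 1 μ) ^ n).toReal :=
          ENNReal.toReal_mono (by finiteness) (pow_le_pow_left₀ zero_le h n)
      _ = C.toReal ^ n * (eLpNorm f 1 μ).toReal ^ n := by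
          rw [ENNReal.toReal_pow, ENNReal.toReal_mul, mul_pow]

theorem eLpNorm_sq_of_map_eq_gaussianReal {X : α → ℝ} {v : ℝ≥0} (hX : AEMeasurable X μ)
    (h : μ.map X = gaussianReal 0 v) (p : ℝ≥0∞) :
    eLpNorm (fun ω ↦ X ω ^ 2) p μ = v * eLpNorm (fun t : ℝ ↦ t ^ 2) p (gaussianReal 0 1) := by
  have hv : gaussianReal 0 v = (gaussianReal 0 1).map (√(v : ℝ) * ·) := by
    rw [gaussianReal_map_const_mul, mul_zero, mul_one]
    congr
    ext
    exact (Real.sq_sqrt v.coe_nonneg).symm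
  have hsq : (fun t : ℝ ↦ t ^ 2) ∘ (√(v : ℝ) * ·) = (v : ℝ) • fun t : ℝ ↦ t ^ 2 := by
    ext t
    simp [mul_pow, Real.sq_sqrt v.coe_nonneg]
  rw [← Function.comp_def (fun t : ℝ ↦ t ^ 2) X, ← eLpNorm_map_measure (by fun_prop) hX, h, hv,
    eLpNorm_map_measure (by fun_prop) (by fun_prop), hsq, eLpNorm_const_smul]
  simp

end

theorem eLpNorm_sq_gaussianReal_one :
    eLpNorm (fun t : ℝ ↦ t ^ 2) 1 (gaussianReal 0 1) = 1 := by
  have h := ofReal_variance (memLp_id_gaussianReal' (μ := 0) (v := 1) 2 (by simp))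
  simp only [variance_id_gaussianReal, evariance, id_eq, integral_id_gaussianReal, sub_zero] at h
  simpa [eLpNorm_one_eq_lintegral_enorm, enorm_pow] using h.symm

theorem eLpNorm_sq_gaussianReal_ne_top {p : ℝ≥0∞} (hp : p ≠ ∞) :
    eLpNorm (fun t : ℝ ↦ t ^ 2) p (gaussianReal 0 1) ≠ ∞ := by
  have hmem := memLp_id_gaussianReal' (μ := 0) (v := 1) (p * ENNReal.ofReal 2) (by finiteness)
  calc eLpNorm (fun t : ℝ ↦ t ^ 2) p (gaussianReal 0 1)
      = eLpNorm (fun t ↦ ‖id t‖ ^ (2 : ℝ)) p (gaussianReal 0 1) :=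
        eLpNorm_congr_norm_ae (.of_forall fun t ↦ by simp)
    _ = eLpNorm id (p * ENNReal.ofReal 2) (gaussianReal 0 1) ^ (2 : ℝ) :=
        eLpNorm_norm_rpow _ two_pos
    _ ≠ ∞ := ENNReal.rpow_ne_top_of_nonneg zero_le_two hmem.eLpNorm_ne_top

theorem HilbertBasis.enorm_sq_eq_tsum {ι 𝕜 E : Type*} [RCLike 𝕜] [NormedAddCommGroup E]
    [InnerProductSpace 𝕜 E] (b : HilbertBasis ι 𝕜 E) (x : E) :
    ‖x‖ₑ ^ 2 = ∑' i, ‖⟪b i, x⟫_𝕜‖ₑ ^ 2 := by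
  have h := lp.hasSum_norm (p := 2) (by norm_num) (b.repr x)
  simp only [ENNReal.toReal_ofNat, Real.rpow_two, b.repr_apply_apply, b.repr.norm_map] at h
  simp only [← ofReal_norm, ← ENNReal.ofReal_pow (norm_nonneg _), ← h.tsum_eq]
  exact ENNReal.ofReal_tsum_of_nonneg (fun i ↦ sq_nonneg _) h.summable

theorem Orthonormal.countable {ι 𝕜 E : Type*} [RCLike 𝕜] [NormedAddCommGroup E]
    [InnerProductSpace 𝕜 E] [TopologicalSpace.SeparableSpace E] {v : ι → E}
    (hv : Orthonormal 𝕜 v) : Countable ι := by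
  refine Pairwise.countable_of_isOpen_disjoint (s := fun i ↦ Metric.ball (v i) (1 / 2))
    (fun i j hij ↦ Metric.ball_disjoint_ball ?_) (fun _ ↦ Metric.isOpen_ball)
    (fun _ ↦ Metric.nonempty_ball.2 (by norm_num))
  have h := norm_sub_sq (𝕜 := 𝕜) (v i) (v j)
  rw [hv.1 i, hv.1 j, hv.2 hij, map_zero, mul_zero, sub_zero, ← dist_eq_norm] at h
  nlinarith [dist_nonneg (x := v i) (y := v j)]

theorem IsCenteredGaussianMeasure.eLpNorm_norm_sq_le {H : Type*} [NormedAddCommGroup H]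
    [InnerProductSpace ℝ H] [CompleteSpace H] [TopologicalSpace.SeparableSpace H]
    [MeasurableSpace H] [BorelSpace H] {γ : Measure H} (hγ : IsCenteredGaussianMeasure γ)
    {p : ℝ≥0∞} (hp : 1 ≤ p) (hp' : p ≠ ∞) :
    eLpNorm (fun x ↦ ‖x‖ ^ 2) p γ ≤
      eLpNorm (fun t : ℝ ↦ t ^ 2) p (gaussianReal 0 1) * eLpNorm (fun x ↦ ‖x‖ ^ 2) 1 γ := by
  obtain ⟨ι, b, -⟩ := exists_hilbertBasis ℝ H
  have := b.orthonormal.countable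
  choose v hv using fun i ↦ hγ.2 (innerSL ℝ (b i))
  set F : ι → H → ℝ≥0∞ := fun i x ↦ ‖⟪b i, x⟫_ℝ ^ 2‖ₑ
  have hF : ∀ i, Measurable (F i) := fun i ↦ by fun_prop
  have hparseval : ∀ r, eLpNorm (fun x ↦ ‖x‖ ^ 2) r γ = eLpNorm (fun x ↦ ∑' i, F i x) r γ :=
    fun r ↦ eLpNorm_congr_enorm_ae (.of_forall fun x ↦ by
      simp [F, enorm_pow, b.enorm_sq_eq_tsum x])
  have hcoord : ∀ i r, eLpNorm (F i) r γ = v i * eLpNorm (fun t : ℝ ↦ t ^ 2) r (gaussianReal 0 1) :=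
    fun i r ↦ (eLpNorm_enorm _).trans <|
      eLpNorm_sq_of_map_eq_gaussianReal (innerSL ℝ (b i)).continuous.aemeasurable (hv i) r
  calc eLpNorm (fun x ↦ ‖x‖ ^ 2) p γ
      ≤ ∑' i, eLpNorm (F i) p γ := hparseval p ▸ eLpNorm_tsum_le hF hp hp'
    _ = eLpNorm (fun t : ℝ ↦ t ^ 2) p (gaussianReal 0 1) * ∑' i, eLpNorm (F i) 1 γ := by
      simp only [hcoord, eLpNorm_sq_gaussianReal_one, mul_one, ENNReal.tsum_mul_right, mul_comm]
    _ = eLpNorm (fun t : ℝ ↦ t ^ 2) p (gaussianReal 0 1) * eLpNorm (fun x ↦ ‖x‖ ^ 2) 1 γ := by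
      simp only [hparseval, eLpNorm_one_eq_lintegral_enorm, enorm_eq_self,
        lintegral_tsum fun i ↦ (hF i).aemeasurable]

theorem stmt12 (q : ℕ) (hq : 1 ≤ q) :
    ∃ C : ℝ, 0 ≤ C ∧
      ∀ (H : Type u) [NormedAddCommGroup H] [InnerProductSpace ℝ H] [CompleteSpace H]
        [TopologicalSpace.SeparableSpace H] [MeasurableSpace H] [BorelSpace H]
        (γ : Measure H), IsCenteredGaussianMeasure γ →
        ∫ x, ‖x‖ ^ (2 * q) ∂γ ≤ C * (∫ x, ‖x‖ ^ 2 ∂γ) ^ q := by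
  refine ⟨(eLpNorm (fun t : ℝ ↦ t ^ 2) q (gaussianReal 0 1)).toReal ^ q, by positivity, ?_⟩
  intro H _ _ _ _ _ _ γ hγ
  have := hγ.1
  simp_rw [pow_mul]
  exact integral_pow_le_of_eLpNorm_le (by fun_prop) (fun x ↦ by positivity) hq
    (eLpNorm_sq_gaussianReal_ne_top (ENNReal.natCast_ne_top q))
    (hγ.eLpNorm_norm_sq_le (by exact_mod_cast hq) (ENNReal.natCast_ne_top q))
end

section
/- Let l > 0 and let k ≥ 0 and m ≥ 1 be integers with 2k + 1 ≤ m. Then Σ_{n=1}^{∞} e^{−π²l²(k−nm)²} ≤ (1/(π²l²m))·e^{−π²l²k²}. -/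
/-!
Since `2k + 1 ≤ m`, each exponent satisfies `(k - nm)² ≥ k² + nm` for `n ≥ 1`, so the series is
dominated by `e^{-π²l²k²}` times the geometric series `∑_{n ≥ 1} e^{-π²l²mn} = 1 / (e^{π²l²m} - 1)`,
and `e^x - 1 ≥ x` by convexity.
-/

open Real

lemma hasSum_exp_neg_mul_succ {x : ℝ} (hx : 0 < x) :
    HasSum (fun n : ℕ => exp (-(x * (n + 1)))) (1 / (exp x - 1)) := by
  have hr : exp (-x) < 1 := exp_lt_one_iff.mpr (neg_neg_of_pos hx)
  have hsum : 1 / (exp x - 1) = exp (-x) * (1 - exp (-x))⁻¹ := by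
    have hx1 : exp x - 1 ≠ 0 := (sub_pos.mpr (one_lt_exp_iff.mpr hx)).ne'
    rw [exp_neg]
    field_simp
  rw [hsum]
  refine ((hasSum_geometric_of_lt_one (exp_pos _).le hr).mul_left (exp (-x))).congr_fun fun n => ?_
  rw [← exp_nat_mul, ← exp_add]
  ring_nf

lemma sq_add_le_sq_sub {k N : ℝ} (hN : 0 ≤ N) (hkN : 2 * k + 1 ≤ N) : k ^ 2 + N ≤ (k - N) ^ 2 := by
  nlinarith [mul_nonneg hN (sub_nonneg.mpr hkN)]

theorem stmt15_general (l : ℝ) (hl : 0 < l) (k m : ℕ) (hkm : 2 * k + 1 ≤ m) :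
    ∑' n : ℕ, Real.exp (-(Real.pi ^ 2 * l ^ 2 * ((k : ℝ) - ((n : ℝ) + 1) * m) ^ 2))
      ≤ 1 / (Real.pi ^ 2 * l ^ 2 * m) * Real.exp (-(Real.pi ^ 2 * l ^ 2 * (k : ℝ) ^ 2)) := by
  set c := π ^ 2 * l ^ 2
  have hc : 0 < c := by positivity
  have hcm : 0 < c * m := mul_pos hc (by exact_mod_cast (Nat.succ_pos _).trans_le hkm)
  have hkm' : 2 * (k : ℝ) + 1 ≤ m := by exact_mod_cast hkm
  have hgeom := (hasSum_exp_neg_mul_succ hcm).mul_left (exp (-(c * k ^ 2)))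
  have hterm (n : ℕ) : exp (-(c * ((k : ℝ) - (n + 1) * m) ^ 2))
      ≤ exp (-(c * k ^ 2)) * exp (-(c * m * (n + 1))) := by
    have hnm : (m : ℝ) ≤ (n + 1) * m := le_mul_of_one_le_left (by positivity) (by simp)
    have hsq := sq_add_le_sq_sub (by positivity) (hkm'.trans hnm)
    rw [← exp_add, exp_le_exp]
    nlinarith [hsq]
  calc _ ≤ exp (-(c * k ^ 2)) * (1 / (exp (c * m) - 1)) :=
        hasSum_le hterm (hgeom.summable.of_nonneg_of_le (fun _ => (exp_pos _).le) hterm).hasSum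
          hgeom
    _ ≤ exp (-(c * k ^ 2)) * (1 / (c * m)) := by
      gcongr
      linarith [add_one_le_exp (c * m)]
    _ = _ := mul_comm _ _

theorem stmt15 (l : ℝ) (hl : 0 < l) (k m : ℕ) (hm : 1 ≤ m) (hkm : 2 * k + 1 ≤ m) :
    ∑' n : ℕ, Real.exp (-(Real.pi ^ 2 * l ^ 2 * ((k : ℝ) - ((n : ℝ) + 1) * m) ^ 2))
      ≤ 1 / (Real.pi ^ 2 * l ^ 2 * m) * Real.exp (-(Real.pi ^ 2 * l ^ 2 * (k : ℝ) ^ 2)) :=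
  stmt15_general l hl k m hkm
end

section
/- Let l > 0, let k be an integer, and let x ∈ ℝ. Then ∫₀¹ (Σ_{n∈ℤ} e^{−(x−y−n)²/(2l²)})·e^{2πi k y} dy = √(2π)·l·e^{−2π²k²l²}·e^{2πi k x}. -/
/-!
Let g be the Gaussian e^{-(t-x)²/(2l²)}. The integrand is the periodization ∑ₙ g(y + n)
times a character, so the integral is a Fourier coefficient of the periodization; unfolding the
sum over n into an integral over ℝ (the key step of Poisson summation, legitimate because
g decays faster than any power) turns it into the Fourier transform of g at -k. The Fourier
transform of a Gaussian is a Gaussian, and the shift by x contributes the phase e^{2πikx}.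
-/

open MeasureTheory

open Real Complex Filter Asymptotics
open scoped FourierTransform

theorem Real.fourier_comp_sub_right {E : Type*} [NormedAddCommGroup E] [NormedSpace ℂ E]
    (f : ℝ → E) (x w : ℝ) :
    𝓕 (fun t ↦ f (t - x)) w = cexp (↑(-2 * π * x * w) * I) • 𝓕 f w := by
  simp_rw [fourier_real_eq_integral_exp_smul, ← integral_smul, smul_smul, ← Complex.exp_add]
  rw [← integral_add_right_eq_self _ x]
  simp only [add_sub_cancel_right]
  congr 1 with v
  push_cast
  ring_nf

theorem fourier_exp_neg_sq_div_two_mul_sq {σ : ℝ} (hσ : 0 < σ) (w : ℝ) :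
    𝓕 (fun t : ℝ ↦ (rexp (-t ^ 2 / (2 * σ ^ 2)) : ℂ)) w
      = (√(2 * π) * σ * rexp (-2 * π ^ 2 * σ ^ 2 * w ^ 2) : ℝ) := by
  set b : ℝ := 1 / (2 * π * σ ^ 2)
  have hb : 0 < (b : ℂ).re := by rw [ofReal_re]; positivity
  have hgauss : (fun t : ℝ ↦ (rexp (-t ^ 2 / (2 * σ ^ 2)) : ℂ))
      = fun t : ℝ ↦ cexp (-π * b * t ^ 2) := by
    ext t
    push_cast [b]
    congr 1
    field_simp
  have hroot : 1 / (b : ℂ) ^ (1 / 2 : ℂ) = (√(2 * π) * σ : ℝ) := by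
    rw [← ofReal_one, ← ofReal_ofNat, ← ofReal_div, ← ofReal_cpow (by positivity), ← ofReal_div,
      ← sqrt_eq_rpow, sqrt_div' _ (by positivity), sqrt_mul (by positivity), sqrt_sq hσ.le]
    simp
  rw [hgauss, fourier_gaussian_pi hb, hroot]
  push_cast [b]
  congr 2
  field_simp

theorem isLittleO_exp_neg_sub_sq_div_cocompact {σ : ℝ} (hσ : σ ≠ 0) (x s : ℝ) :
    (fun t : ℝ ↦ (rexp (-(t - x) ^ 2 / (2 * σ ^ 2)) : ℂ)) =o[cocompact ℝ] (|·| ^ s) := by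
  have ha : ((-1 / (2 * σ ^ 2) : ℝ) : ℂ).re < 0 := by
    rw [ofReal_re]; exact div_neg_of_neg_of_pos (by norm_num) (by positivity)
  have hexpand : (fun t : ℝ ↦ (rexp (-(t - x) ^ 2 / (2 * σ ^ 2)) : ℂ)) = fun t : ℝ ↦
      cexp (-x ^ 2 / (2 * σ ^ 2) : ℝ) *
        cexp ((-1 / (2 * σ ^ 2) : ℝ) * t ^ 2 + (x / σ ^ 2 : ℝ) * t) := by
    ext t
    rw [ofReal_exp, ← Complex.exp_add]
    congr 1
    push_cast
    field_simp
    ring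
  rw [hexpand]
  exact (cexp_neg_quadratic_isLittleO_abs_rpow_cocompact ha _ s).const_mul_left _

theorem intervalIntegral_tsum_comp_add_mul_cexp_eq_fourier {f : ℝ → ℂ} (hc : Continuous f)
    {b : ℝ} (hb : 1 < b) (hf : f =O[cocompact ℝ] (|·| ^ (-b))) (m : ℤ) :
    ∫ y in (0:ℝ)..1, (∑' n : ℤ, f (y + n)) * cexp (-2 * π * I * m * y) = 𝓕 f m := by
  have hsum : ∀ K : TopologicalSpace.Compacts ℝ, Summable fun n : ℤ ↦
      ‖((⟨f, hc⟩ : C(ℝ, ℂ)).comp (ContinuousMap.addRight n)).restrict K‖ :=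
    fun K ↦ summable_of_isBigO (Real.summable_abs_int_rpow hb)
      ((isBigO_norm_restrict_cocompact ⟨f, hc⟩ (zero_lt_one.trans hb) hf K).comp_tendsto
      Int.tendsto_coe_cofinite)
  refine Eq.trans ?_ (Real.fourierCoeff_tsum_comp_add hsum m)
  rw [fourierCoeff_eq_intervalIntegral _ m 0]
  simp only [zero_add, div_one, one_smul, smul_eq_mul]
  refine intervalIntegral.integral_congr fun y _ ↦ ?_
  simp only [Function.Periodic.lift_coe, fourier_coe_apply, zsmul_one]
  rw [← ContinuousMap.tsum_apply (ContinuousMap.summable_of_locally_summable_norm hsum)]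
  simp only [ContinuousMap.comp_apply, ContinuousMap.coe_addRight, ContinuousMap.coe_mk]
  push_cast
  ring_nf

theorem stmt16 (l : ℝ) (hl : 0 < l) (k : ℤ) (x : ℝ) :
    ∫ y in (0:ℝ)..1,
        ((∑' n : ℤ, Real.exp (-(x - y - (n : ℝ)) ^ 2 / (2 * l ^ 2))) : ℂ)
          * Complex.exp (2 * Real.pi * Complex.I * (k : ℂ) * (y : ℂ))
      = ((Real.sqrt (2 * Real.pi) * l * Real.exp (-2 * Real.pi ^ 2 * (k : ℝ) ^ 2 * l ^ 2)) : ℂ)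
          * Complex.exp (2 * Real.pi * Complex.I * (k : ℂ) * (x : ℂ)) := by
  set f : ℝ → ℂ := fun t ↦ rexp (-(t - x) ^ 2 / (2 * l ^ 2)) with hf
  have hperiodization (y : ℝ) :
      ∑' n : ℤ, (rexp (-(x - y - n) ^ 2 / (2 * l ^ 2)) : ℂ) = ∑' n : ℤ, f (y + n) := by
    congr 1 with n
    rw [hf]
    ring_nf
  have hcont : Continuous f := by fun_prop
  calc _ = ∫ y in (0:ℝ)..1,
          (∑' n : ℤ, f (y + n)) * cexp (-2 * π * I * ((-k : ℤ) : ℂ) * y) := by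
        simp only [hperiodization, Int.cast_neg, mul_neg, neg_mul, neg_neg]
    _ = 𝓕 f ((-k : ℤ) : ℝ) :=
        intervalIntegral_tsum_comp_add_mul_cexp_eq_fourier hcont one_lt_two
          (isLittleO_exp_neg_sub_sq_div_cocompact hl.ne' x _).isBigO _
    _ = _ := by
        rw [hf, Real.fourier_comp_sub_right (fun t ↦ (rexp (-t ^ 2 / (2 * l ^ 2)) : ℂ)),
          fourier_exp_neg_sq_div_two_mul_sq hl, smul_eq_mul]
        push_cast
        ring_nf
end

section
/- Let 0 < ε ≤ 1, let p : [0,1] → ℝ be continuous with 0 < α ≤ p(x) ≤ P for all x ∈ [0,1], let h : [0,1] → ℝ be continuous, and let u : [0,1] → ℝ be twice continuously differentiable with u(0) = u(1) = 0 and −ε·u''(x) + p(x)·u'(x) = h(x) for all x ∈ [0,1]. Then |u'(1)| ≤ (P/(1 − e^{−P}))·ε^{−2}·∫₀¹ ∫_t¹ e^{−α(s−t)/ε}·|h(s)| ds dt. -/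
/-!
Write `Q t = ∫ₜ¹ p`. Since `(u' e^{Q/ε})' = -(h/ε) e^{Q/ε}`, variation of constants gives
`u'(t) = (u'(1) + ε⁻¹ ∫ₜ¹ h e^{Q/ε}) e^{-Q(t)/ε}`. Integrating over `[0,1]` and using
`∫₀¹ u' = u(1) - u(0) = 0` expresses `u'(1) · ∫₀¹ e^{-Q/ε}` through a double integral of `h`.
From `Q ≤ P (1 - t)` and `ε ≤ 1` we get `∫₀¹ e^{-Q/ε} ≥ (ε/P)(1 - e^{-P})`, and from `p ≥ α` the
kernel `e^{(Q(s) - Q(t))/ε}` is at most `e^{-α(s-t)/ε}` for `t ≤ s`.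
-/

open MeasureTheory Set Real intervalIntegral

section IntegralOnIcc

variable {a b : ℝ} {f : ℝ → ℝ}

theorem ContinuousOn.intervalIntegrable_of_mem_Icc (hf : ContinuousOn f (Icc a b)) {t s : ℝ}
    (ht : t ∈ Icc a b) (hs : s ∈ Icc a b) : IntervalIntegrable f volume t s :=
  (hf.mono (uIcc_subset_Icc ht hs)).intervalIntegrable

theorem continuousOn_integral_left (hab : a ≤ b) (hf : ContinuousOn f (Icc a b)) :
    ContinuousOn (fun t => ∫ s in t..b, f s) (Icc a b) := by
  rw [← uIcc_of_le hab] at hf ⊢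
  exact continuousOn_primitive_interval_left (hf.integrableOn_compact isCompact_uIcc)

theorem hasDerivAt_integral_left (hf : ContinuousOn f (Icc a b)) {x : ℝ} (hx : x ∈ Ioo a b) :
    HasDerivAt (fun t => ∫ s in t..b, f s) (-f x) x :=
  integral_hasDerivAt_left
    (hf.intervalIntegrable_of_mem_Icc (Ioo_subset_Icc_self hx)
      (right_mem_Icc.2 (hx.1.trans hx.2).le))
    ((hf.mono Ioo_subset_Icc_self).stronglyMeasurableAtFilter isOpen_Ioo x hx)
    (hf.continuousAt (Icc_mem_nhds hx.1 hx.2))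

end IntegralOnIcc

section VariationOfConstants

variable {ε a b : ℝ} {p h u u' u'' : ℝ → ℝ}

theorem eq_mul_exp_neg_integral (hε : ε ≠ 0) (hp : ContinuousOn p (Icc a b))
    (hh : ContinuousOn h (Icc a b)) (hu' : ∀ x ∈ Icc a b, HasDerivAt u' (u'' x) x)
    (heq : ∀ x ∈ Icc a b, -ε * u'' x + p x * u' x = h x) {t : ℝ} (ht : t ∈ Icc a b) :
    u' t = (u' b + ε⁻¹ * ∫ s in t..b, h s * exp ((∫ r in s..b, p r) / ε))
      * exp (-(∫ s in t..b, p s) / ε) := by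
  set Q : ℝ → ℝ := fun t => ∫ s in t..b, p s
  have hsub : Icc t b ⊆ Icc a b := Icc_subset_Icc ht.1 le_rfl
  have hEQ : ContinuousOn (fun x => exp (Q x / ε)) (Icc a b) :=
    continuous_exp.comp_continuousOn ((continuousOn_integral_left (ht.1.trans ht.2) hp).div_const ε)
  have hftc : ∫ x in t..b, -(ε⁻¹ * (h x * exp (Q x / ε)))
      = u' b * exp (Q b / ε) - u' t * exp (Q t / ε) := by
    refine integral_eq_sub_of_hasDerivAt_of_le ht.2
      (((HasDerivAt.continuousOn hu').mul hEQ).mono hsub) (fun x hx => ?_)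
      ((continuousOn_const.mul (hh.mul hEQ)).neg.mono hsub |>.intervalIntegrable_of_Icc ht.2)
    have hxab : x ∈ Ioo a b := ⟨ht.1.trans_lt hx.1, hx.2⟩
    refine ((hu' x (Ioo_subset_Icc_self hxab)).mul
      ((hasDerivAt_integral_left hp hxab).div_const ε).exp).congr_deriv ?_
    rw [← heq x (Ioo_subset_Icc_self hxab)]
    field_simp
    ring
  have hQb : Q b = 0 := integral_same
  rw [intervalIntegral.integral_neg, intervalIntegral.integral_const_mul, hQb, zero_div, exp_zero,
    mul_one] at hftc
  rw [neg_div, exp_neg, eq_mul_inv_iff_mul_eq₀ (exp_pos _).ne']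
  linarith

theorem mul_integral_exp_neg_integral_eq (hε : ε ≠ 0) (hab : a ≤ b)
    (hp : ContinuousOn p (Icc a b)) (hh : ContinuousOn h (Icc a b))
    (hu : ∀ x ∈ Icc a b, HasDerivAt u (u' x) x) (hu' : ∀ x ∈ Icc a b, HasDerivAt u' (u'' x) x)
    (heq : ∀ x ∈ Icc a b, -ε * u'' x + p x * u' x = h x) (hub : u a = u b) :
    u' b * ∫ t in a..b, exp (-(∫ s in t..b, p s) / ε)
      = -(ε⁻¹ * ∫ t in a..b,
          (∫ s in t..b, h s * exp ((∫ r in s..b, p r) / ε)) * exp (-(∫ s in t..b, p s) / ε)) := by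
  set E : ℝ → ℝ := fun t => exp (-(∫ s in t..b, p s) / ε)
  set W : ℝ → ℝ := fun t => ∫ s in t..b, h s * exp ((∫ r in s..b, p r) / ε)
  have hQ := continuousOn_integral_left hab hp
  have hE : ContinuousOn E (Icc a b) := continuous_exp.comp_continuousOn (hQ.neg.div_const ε)
  have hW : ContinuousOn W (Icc a b) :=
    continuousOn_integral_left hab (hh.mul (continuous_exp.comp_continuousOn (hQ.div_const ε)))
  have hsplit : ∫ t in a..b, (u' b + ε⁻¹ * W t) * E t
      = u' b * (∫ t in a..b, E t) + ε⁻¹ * ∫ t in a..b, W t * E t := by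
    have hE_int : IntervalIntegrable (fun t => u' b * E t) volume a b :=
      (continuousOn_const.mul hE).intervalIntegrable_of_Icc hab
    have hWE_int : IntervalIntegrable (fun t => ε⁻¹ * (W t * E t)) volume a b :=
      (continuousOn_const.mul (hW.mul hE)).intervalIntegrable_of_Icc hab
    rw [← intervalIntegral.integral_const_mul, ← intervalIntegral.integral_const_mul,
      ← intervalIntegral.integral_add hE_int hWE_int]
    exact integral_congr fun t _ => by ring
  have hu'_rep : EqOn u' (fun t => (u' b + ε⁻¹ * W t) * E t) (uIcc a b) := fun t ht =>
    eq_mul_exp_neg_integral hε hp hh hu' heq (by rwa [uIcc_of_le hab] at ht)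
  have hu'_int : ∫ t in a..b, u' t = u b - u a :=
    integral_eq_sub_of_hasDerivAt (fun x hx => hu x (by rwa [uIcc_of_le hab] at hx))
      ((HasDerivAt.continuousOn hu').intervalIntegrable_of_Icc hab)
  rw [integral_congr hu'_rep, hsplit, hub, sub_self] at hu'_int
  linarith

end VariationOfConstants

section Bounds

variable {ε a b α P : ℝ} {p g h : ℝ → ℝ}

theorem integral_exp_neg_mul_sub_div (hP : P ≠ 0) (hε : ε ≠ 0) :
    ∫ t in a..b, exp (-P * (b - t) / ε) = ε / P * (1 - exp (-P * (b - a) / ε)) := by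
  have hF (t : ℝ) : HasDerivAt (fun t => ε / P * exp (-P * (b - t) / ε))
      (exp (-P * (b - t) / ε)) t := by
    refine (((((hasDerivAt_id' t).const_sub b).const_mul (-P)).div_const ε).exp.const_mul
      (ε / P)).congr_deriv ?_
    field_simp
  rw [integral_eq_sub_of_hasDerivAt (fun t _ => hF t)
    (Continuous.intervalIntegrable (by fun_prop) _ _)]
  simp only [sub_self, mul_zero, zero_div, exp_zero]
  ring

theorem le_integral_exp_neg_integral (hP : 0 < P) (hε : 0 < ε) (hab : a ≤ b)
    (hp : ContinuousOn p (Icc a b)) (hpu : ∀ x ∈ Icc a b, p x ≤ P) :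
    ε / P * (1 - exp (-P * (b - a) / ε)) ≤ ∫ t in a..b, exp (-(∫ s in t..b, p s) / ε) := by
  rw [← integral_exp_neg_mul_sub_div hP.ne' hε.ne']
  refine integral_mono_on hab (Continuous.intervalIntegrable (by fun_prop) _ _)
    ((continuous_exp.comp_continuousOn ((continuousOn_integral_left hab hp).neg.div_const ε)
      ).intervalIntegrable_of_Icc hab) fun t ht => ?_
  have hQ : ∫ s in t..b, p s ≤ ∫ s in t..b, P :=
    integral_mono_on ht.2 (hp.intervalIntegrable_of_mem_Icc ht (right_mem_Icc.2 hab))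
      intervalIntegrable_const fun x hx => hpu x ⟨ht.1.trans hx.1, hx.2⟩
  rw [intervalIntegral.integral_const, smul_eq_mul] at hQ
  gcongr
  linarith

theorem exp_integral_sub_integral_le (hε : 0 < ε) (hp : ContinuousOn p (Icc a b))
    (hpl : ∀ x ∈ Icc a b, α ≤ p x) {t s : ℝ} (ht : t ∈ Icc a b) (hs : s ∈ Icc a b) (hts : t ≤ s) :
    exp ((∫ r in s..b, p r) / ε) * exp (-(∫ r in t..b, p r) / ε) ≤ exp (-α * (s - t) / ε) := by
  have hb : b ∈ Icc a b := right_mem_Icc.2 (ht.1.trans ht.2)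
  have hsplit := integral_add_adjacent_intervals (hp.intervalIntegrable_of_mem_Icc ht hs)
    (hp.intervalIntegrable_of_mem_Icc hs hb)
  have hlow : ∫ r in t..s, α ≤ ∫ r in t..s, p r :=
    integral_mono_on hts intervalIntegrable_const (hp.intervalIntegrable_of_mem_Icc ht hs)
      fun x hx => hpl x ⟨ht.1.trans hx.1, hx.2.trans hs.2⟩
  rw [intervalIntegral.integral_const, smul_eq_mul] at hlow
  rw [← exp_add, ← add_div]
  gcongr
  linarith

theorem continuousOn_integral_exp_mul (hab : a ≤ b) (hg : ContinuousOn g (Icc a b)) :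
    ContinuousOn (fun t => ∫ s in t..b, exp (-α * (s - t) / ε) * g s) (Icc a b) := by
  have hfactor (t : ℝ) : ∫ s in t..b, exp (-α * (s - t) / ε) * g s
      = exp (α * t / ε) * ∫ s in t..b, exp (-α * s / ε) * g s := by
    rw [← intervalIntegral.integral_const_mul]
    refine integral_congr fun s _ => ?_
    rw [← mul_assoc, ← exp_add]
    ring_nf
  simp_rw [hfactor]
  exact (Continuous.continuousOn (by fun_prop)).mul
    (continuousOn_integral_left hab ((Continuous.continuousOn (by fun_prop)).mul hg))

theorem abs_integral_mul_exp_le (hε : 0 < ε) (hp : ContinuousOn p (Icc a b))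
    (hh : ContinuousOn h (Icc a b)) (hpl : ∀ x ∈ Icc a b, α ≤ p x) {t : ℝ} (ht : t ∈ Icc a b) :
    |∫ s in t..b, h s * exp ((∫ r in s..b, p r) / ε)| * exp (-(∫ s in t..b, p s) / ε)
      ≤ ∫ s in t..b, exp (-α * (s - t) / ε) * |h s| := by
  have hab := ht.1.trans ht.2
  have hsub : Icc t b ⊆ Icc a b := Icc_subset_Icc ht.1 le_rfl
  have hEQ : ContinuousOn (fun s => exp ((∫ r in s..b, p r) / ε)) (Icc a b) :=
    continuous_exp.comp_continuousOn ((continuousOn_integral_left hab hp).div_const ε)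
  calc |∫ s in t..b, h s * exp ((∫ r in s..b, p r) / ε)| * exp (-(∫ s in t..b, p s) / ε)
      ≤ (∫ s in t..b, |h s| * exp ((∫ r in s..b, p r) / ε)) * exp (-(∫ s in t..b, p s) / ε) := by
        gcongr
        refine (abs_integral_le_integral_abs ht.2).trans_eq (integral_congr fun s _ => ?_)
        simp only [abs_mul, abs_exp]
    _ = ∫ s in t..b, |h s| * (exp ((∫ r in s..b, p r) / ε) * exp (-(∫ s in t..b, p s) / ε)) := by
        rw [← intervalIntegral.integral_mul_const]
        exact integral_congr fun s _ => mul_assoc _ _ _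
    _ ≤ ∫ s in t..b, exp (-α * (s - t) / ε) * |h s| := by
        refine integral_mono_on ht.2
          (((hh.abs.mul (hEQ.mul continuousOn_const)).mono hsub).intervalIntegrable_of_Icc ht.2)
          (((Continuous.continuousOn (by fun_prop)).mul hh.abs).mono hsub
            |>.intervalIntegrable_of_Icc ht.2) fun s hs => ?_
        rw [mul_comm]
        exact mul_le_mul_of_nonneg_right
          (exp_integral_sub_integral_le hε hp hpl ht (hsub hs) hs.1) (abs_nonneg _)

theorem abs_integral_le_integral_integral_exp_mul_abs (hε : 0 < ε) (hab : a ≤ b)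
    (hp : ContinuousOn p (Icc a b)) (hh : ContinuousOn h (Icc a b))
    (hpl : ∀ x ∈ Icc a b, α ≤ p x) :
    |∫ t in a..b,
        (∫ s in t..b, h s * exp ((∫ r in s..b, p r) / ε)) * exp (-(∫ s in t..b, p s) / ε)|
      ≤ ∫ t in a..b, ∫ s in t..b, exp (-α * (s - t) / ε) * |h s| := by
  have hQ := continuousOn_integral_left hab hp
  have hW : ContinuousOn (fun t => ∫ s in t..b, h s * exp ((∫ r in s..b, p r) / ε)) (Icc a b) :=
    continuousOn_integral_left hab (hh.mul (continuous_exp.comp_continuousOn (hQ.div_const ε)))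
  have hE : ContinuousOn (fun t => exp (-(∫ s in t..b, p s) / ε)) (Icc a b) :=
    continuous_exp.comp_continuousOn (hQ.neg.div_const ε)
  refine (abs_integral_le_integral_abs hab).trans (integral_mono_on hab
    ((hW.mul hE).abs.intervalIntegrable_of_Icc hab)
    ((continuousOn_integral_exp_mul hab hh.abs).intervalIntegrable_of_Icc hab) fun t ht => ?_)
  rw [abs_mul, abs_exp]
  exact abs_integral_mul_exp_le hε hp hh hpl ht

end Bounds

theorem stmt17_general (ε α P : ℝ) (hε : 0 < ε) (hε1 : ε ≤ 1) (hα : 0 < α)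
    (p h u u' u'' : ℝ → ℝ)
    (hp : ContinuousOn p (Icc (0:ℝ) 1))
    (hpl : ∀ x ∈ Icc (0:ℝ) 1, α ≤ p x) (hpu : ∀ x ∈ Icc (0:ℝ) 1, p x ≤ P)
    (hh : ContinuousOn h (Icc (0:ℝ) 1))
    (hu : ∀ x ∈ Icc (0:ℝ) 1, HasDerivAt u (u' x) x)
    (hu' : ∀ x ∈ Icc (0:ℝ) 1, HasDerivAt u' (u'' x) x)
    (hu0 : u 0 = 0) (hu1 : u 1 = 0)
    (heq : ∀ x ∈ Icc (0:ℝ) 1, -ε * u'' x + p x * u' x = h x) :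
    |u' 1| ≤ (P / (1 - Real.exp (-P))) * ε ^ (-2 : ℤ)
      * ∫ t in (0:ℝ)..1, ∫ s in t..1, Real.exp (-α * (s - t) / ε) * |h s| := by
  have hP : 0 < P := hα.trans_le ((hpl 0 ⟨le_rfl, zero_le_one⟩).trans (hpu 0 ⟨le_rfl, zero_le_one⟩))
  set I := ∫ t in (0:ℝ)..1, exp (-(∫ s in t..1, p s) / ε)
  set D := ∫ t in (0:ℝ)..1, ∫ s in t..1, exp (-α * (s - t) / ε) * |h s|
  have hc : 0 < ε / P * (1 - exp (-P)) :=
    mul_pos (div_pos hε hP) (sub_pos.2 (exp_lt_one_iff.2 (neg_neg_of_pos hP)))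
  have hcI : ε / P * (1 - exp (-P)) ≤ I := by
    refine le_trans ?_ (le_integral_exp_neg_integral hP hε zero_le_one hp hpu)
    gcongr
    rw [sub_zero, mul_one, div_le_iff₀ hε]
    nlinarith
  have huI : |u' 1| * I ≤ ε⁻¹ * D := by
    rw [← abs_of_pos (hc.trans_le hcI), ← abs_mul,
      mul_integral_exp_neg_integral_eq hε.ne' zero_le_one hp hh hu hu' heq (hu0.trans hu1.symm),
      abs_neg, abs_mul, abs_inv, abs_of_pos hε]
    gcongr
    exact abs_integral_le_integral_integral_exp_mul_abs hε zero_le_one hp hh hpl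
  calc |u' 1| ≤ ε⁻¹ * D / (ε / P * (1 - exp (-P))) := by
        rw [le_div_iff₀ hc]
        exact (mul_le_mul_of_nonneg_left hcI (abs_nonneg _)).trans huI
    _ = P / (1 - exp (-P)) * ε ^ (-2 : ℤ) * D := by
        field_simp

theorem stmt17 (ε α P : ℝ) (hε : 0 < ε) (hε1 : ε ≤ 1) (hα : 0 < α)
    (p h u u' u'' : ℝ → ℝ)
    (hp : ContinuousOn p (Icc (0:ℝ) 1))
    (hpl : ∀ x ∈ Icc (0:ℝ) 1, α ≤ p x) (hpu : ∀ x ∈ Icc (0:ℝ) 1, p x ≤ P)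
    (hh : ContinuousOn h (Icc (0:ℝ) 1))
    (hu : ∀ x ∈ Icc (0:ℝ) 1, HasDerivAt u (u' x) x)
    (hu' : ∀ x ∈ Icc (0:ℝ) 1, HasDerivAt u' (u'' x) x)
    (hu'' : ContinuousOn u'' (Icc (0:ℝ) 1))
    (hu0 : u 0 = 0) (hu1 : u 1 = 0)
    (heq : ∀ x ∈ Icc (0:ℝ) 1, -ε * u'' x + p x * u' x = h x) :
    |u' 1| ≤ (P / (1 - Real.exp (-P))) * ε ^ (-2 : ℤ)
      * ∫ t in (0:ℝ)..1, ∫ s in t..1, Real.exp (-α * (s - t) / ε) * |h s| :=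
  stmt17_general ε α P hε hε1 hα p h u u' u'' hp hpl hpu hh hu hu' hu0 hu1 heq
end

section
/- Let l > 0 and let K ≥ 0 be an integer. Then √(2π)·l·Σ_{j∈ℤ, |j|>K} e^{−2π²l²j²} ≤ e^{−2π²l²K²}. -/
/-!
Writing `j = ±(K + 1 + n)` and using `(K + m)² ≥ K² + m²` for `K, m ≥ 0`, the sum is at most
`2 e^{-cK²} ∑_{m ≥ 1} e^{-cm²}` with `c = 2π²l²`. As `x ↦ e^{-cx²}` decreases on `[0, ∞)`, the
last sum is at most `∫_0^∞ e^{-cx²} dx = √(π/c)/2`, and `√(2π) · l · √(π/c) = 1`.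
-/

open Real Finset MeasureTheory

def natSumNatEquivLtAbs (K : ℕ) : ℕ ⊕ ℕ ≃ {j : ℤ // (K : ℤ) < |j|} where
  toFun := Sum.elim (fun n => ⟨K + 1 + n, lt_abs.2 (.inl (by omega))⟩)
    (fun n => ⟨-(K + 1 + n), lt_abs.2 (.inr (by omega))⟩)
  invFun j := if 0 < (j : ℤ) then .inl ((j : ℤ) - K - 1).toNat else .inr (-(j : ℤ) - K - 1).toNat
  left_inv := by
    rintro (n | n) <;> dsimp only [Sum.elim_inl, Sum.elim_inr] <;> split_ifs <;>
      first | omega | (congr; omega)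
  right_inv := by
    rintro ⟨j, hj⟩
    have := lt_abs.1 hj
    dsimp only
    split_ifs <;> simp only [Sum.elim_inl, Sum.elim_inr, Subtype.mk.injEq] <;> omega

theorem hasSum_subtype_lt_abs {α : Type*} [AddCommMonoid α] [TopologicalSpace α]
    [ContinuousAdd α] {f : ℤ → α} {a b : α} (K : ℕ)
    (ha : HasSum (fun n : ℕ => f (K + 1 + n)) a)
    (hb : HasSum (fun n : ℕ => f (-(K + 1 + n))) b) :
    HasSum (fun j : {j : ℤ // (K : ℤ) < |j|} => f j) (a + b) :=
  (natSumNatEquivLtAbs K).hasSum_iff.1 (ha.sum hb)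

theorem exp_neg_mul_add_sq_le {c x y : ℝ} (hc : 0 ≤ c) (hx : 0 ≤ x) (hy : 0 ≤ y) :
    exp (-c * (x + y) ^ 2) ≤ exp (-c * x ^ 2) * exp (-c * y ^ 2) := by
  rw [← exp_add, exp_le_exp]
  nlinarith [mul_nonneg hc (mul_nonneg hx hy)]

theorem sum_range_exp_neg_mul_sq_succ_le {c : ℝ} (hc : 0 < c) (N : ℕ) :
    ∑ n ∈ range N, exp (-c * ((n : ℝ) + 1) ^ 2) ≤ √(π / c) / 2 := by
  have hanti : AntitoneOn (fun x : ℝ => exp (-c * x ^ 2)) (Set.Icc 0 (0 + N)) := by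
    intro x hx y _ hxy
    rw [exp_le_exp]
    nlinarith [mul_nonneg hc.le (mul_nonneg (sub_nonneg.2 hxy) (add_nonneg hx.1 (hx.1.trans hxy)))]
  calc ∑ n ∈ range N, exp (-c * ((n : ℝ) + 1) ^ 2)
      ≤ ∫ x in (0 : ℝ)..0 + N, exp (-c * x ^ 2) := by
        simpa using hanti.sum_le_integral
    _ ≤ ∫ x in Set.Ioi (0 : ℝ), exp (-c * x ^ 2) := by
        rw [zero_add, intervalIntegral.integral_of_le N.cast_nonneg]
        exact setIntegral_mono_set (integrable_exp_neg_mul_sq hc).integrableOn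
          (.of_forall fun x => (exp_pos _).le) Set.Ioc_subset_Ioi_self.eventuallyLE
    _ = √(π / c) / 2 := integral_gaussian_Ioi c

theorem summable_exp_neg_mul_sq_succ {c : ℝ} (hc : 0 < c) :
    Summable (fun n : ℕ => exp (-c * ((n : ℝ) + 1) ^ 2)) :=
  summable_of_sum_range_le (fun _ => (exp_pos _).le) (sum_range_exp_neg_mul_sq_succ_le hc)

theorem tsum_exp_neg_mul_sq_succ_le {c : ℝ} (hc : 0 < c) :
    ∑' n : ℕ, exp (-c * ((n : ℝ) + 1) ^ 2) ≤ √(π / c) / 2 :=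
  Real.tsum_le_of_sum_range_le (fun _ => (exp_pos _).le) (sum_range_exp_neg_mul_sq_succ_le hc)

theorem tsum_subtype_lt_abs_exp_neg_mul_sq_le {c : ℝ} (hc : 0 < c) (K : ℕ) :
    ∑' j : {j : ℤ // (K : ℤ) < |j|}, exp (-c * ((j : ℤ) : ℝ) ^ 2)
      ≤ exp (-c * (K : ℝ) ^ 2) * √(π / c) := by
  have hsum := summable_exp_neg_mul_sq_succ hc
  have hshift : ∀ n : ℕ, exp (-c * ((K : ℝ) + 1 + n) ^ 2)
      ≤ exp (-c * (K : ℝ) ^ 2) * exp (-c * ((n : ℝ) + 1) ^ 2) := fun n => by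
    rw [add_assoc, add_comm 1]
    exact exp_neg_mul_add_sq_le hc.le K.cast_nonneg (by positivity)
  have hsum' : Summable (fun n : ℕ => exp (-c * ((K : ℝ) + 1 + n) ^ 2)) :=
    (hsum.mul_left _).of_nonneg_of_le (fun _ => (exp_pos _).le) hshift
  have hpos : HasSum (fun n : ℕ => exp (-c * ((K + 1 + n : ℤ) : ℝ) ^ 2))
      (∑' n : ℕ, exp (-c * ((K : ℝ) + 1 + n) ^ 2)) := by
    push_cast; exact hsum'.hasSum
  have hneg : HasSum (fun n : ℕ => exp (-c * ((-(K + 1 + n) : ℤ) : ℝ) ^ 2))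
      (∑' n : ℕ, exp (-c * ((K : ℝ) + 1 + n) ^ 2)) := by
    push_cast [neg_sq]; exact hsum'.hasSum
  have hS := hasSum_subtype_lt_abs (f := fun j : ℤ => exp (-c * (j : ℝ) ^ 2)) K hpos hneg
  rw [hS.tsum_eq, ← two_mul]
  calc _ ≤ 2 * (exp (-c * (K : ℝ) ^ 2) * ∑' n : ℕ, exp (-c * ((n : ℝ) + 1) ^ 2)) := by
        gcongr
        exact (hsum'.tsum_le_tsum hshift (hsum.mul_left _)).trans_eq tsum_mul_left
    _ ≤ exp (-c * (K : ℝ) ^ 2) * √(π / c) := by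
        nlinarith [exp_pos (-c * (K : ℝ) ^ 2), tsum_exp_neg_mul_sq_succ_le hc]

theorem stmt18 (l : ℝ) (hl : 0 < l) (K : ℕ) :
    Real.sqrt (2 * Real.pi) * l
        * ∑' j : {j : ℤ // (K : ℤ) < |j|},
            Real.exp (-(2 * Real.pi ^ 2 * l ^ 2 * ((j : ℤ) : ℝ) ^ 2))
      ≤ Real.exp (-(2 * Real.pi ^ 2 * l ^ 2 * (K : ℝ) ^ 2)) := by
  have hc : 0 < 2 * π ^ 2 * l ^ 2 := by positivity
  have hnorm : √(2 * π) * l * √(π / (2 * π ^ 2 * l ^ 2)) = 1 := by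
    rw [mul_right_comm, ← sqrt_mul (by positivity)]
    have : 2 * π * (π / (2 * π ^ 2 * l ^ 2)) = (l⁻¹) ^ 2 := by field_simp
    rw [this, sqrt_sq (by positivity), inv_mul_cancel₀ hl.ne']
  have hbound := tsum_subtype_lt_abs_exp_neg_mul_sq_le hc K
  simp only [neg_mul] at hbound
  calc _ ≤ √(2 * π) * l
          * (exp (-(2 * π ^ 2 * l ^ 2 * (K : ℝ) ^ 2)) * √(π / (2 * π ^ 2 * l ^ 2))) :=
        mul_le_mul_of_nonneg_left hbound (by positivity)
    _ = exp (-(2 * π ^ 2 * l ^ 2 * (K : ℝ) ^ 2)) := by rw [mul_left_comm, hnorm, mul_one]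
end
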